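/- arXiv:1605.06027 — 10 statements merged into one kernel-verified Lean document; each statement's English description precedes it below -/
import Mathlib

section
/- Let C ∈ T_n(R) and 1 ≤ i ≤ j ≤ n, and let C^{[i,j]} be the matrix obtained from C by replacing all entries with row- or column-index outside the interval [i,j] by zeros. Then for every polynomial f ∈ R[x], the (i,j)-entry of f(C) (obtained by evaluating f at the matrix C) equals the (i,j)-entry of f(C^{[i,j]}). -/
/-!
For upper triangular `C`, the `(a, b)` entry of `C ^ k` is a sum of products
`C a c₁ * C c₁ c₂ * ⋯ * C cₖ₋₁ b` along chains `a ≤ c₁ ≤ ⋯ ≤ b`, so it only involves entries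
of `C` inside the block `[a, b] × [a, b]`. Hence upper triangular matrices agreeing on a block
have powers agreeing on that block, and so do their polynomial evaluations, being linear
combinations of powers.
-/

namespace Matrix.BlockTriangular

variable {ι R : Type*} [LinearOrder ι] [Fintype ι] [DecidableEq ι]

theorem pow_apply_eq_of_apply_eq [Semiring R] {C D : Matrix ι ι R}
    (hC : C.BlockTriangular id) (hD : D.BlockTriangular id) {i j : ι}
    (hCD : ∀ x y, i ≤ x → x ≤ y → y ≤ j → C x y = D x y) (k : ℕ) :
    ∀ a b, i ≤ a → b ≤ j → (C ^ k) a b = (D ^ k) a b := by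
  induction k with
  | zero => intro a b _ _; rfl
  | succ k ih =>
    intro a b hia hbj
    simp only [pow_succ', mul_apply]
    refine Finset.sum_congr rfl fun c _ => ?_
    rcases lt_or_ge c a with hca | hac
    · rw [hC hca, hD hca, zero_mul, zero_mul]
    rcases lt_or_ge b c with hbc | hcb
    · rw [hC.pow k hbc, hD.pow k hbc, mul_zero, mul_zero]
    rw [hCD a c hia hac (hcb.trans hbj), ih c b (hia.trans hac) hbj]

theorem aeval_apply_eq_of_apply_eq [CommSemiring R] {C D : Matrix ι ι R}
    (hC : C.BlockTriangular id) (hD : D.BlockTriangular id) {i j : ι}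
    (hCD : ∀ x y, i ≤ x → x ≤ y → y ≤ j → C x y = D x y) (f : Polynomial R)
    {a b : ι} (hia : i ≤ a) (hbj : b ≤ j) :
    Polynomial.aeval C f a b = Polynomial.aeval D f a b := by
  simp only [Polynomial.aeval_eq_sum_range, sum_apply, smul_apply]
  exact Finset.sum_congr rfl fun k _ => by
    rw [pow_apply_eq_of_apply_eq hC hD hCD k a b hia hbj]

end Matrix.BlockTriangular

theorem stmt4_general (n : ℕ) (R : Type*) [CommRing R] (C : Matrix (Fin n) (Fin n) R)
    (hC : C.BlockTriangular id) (i j : Fin n)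
    (D : Matrix (Fin n) (Fin n) R)
    (hD : ∀ a b, D a b = if i ≤ a ∧ a ≤ j ∧ i ≤ b ∧ b ≤ j then C a b else 0)
    (f : Polynomial R) :
    (Polynomial.aeval C f) i j = (Polynomial.aeval D f) i j := by
  have hDtri : D.BlockTriangular id := fun a b hba => by
    rw [hD]
    split_ifs
    · exact hC hba
    · rfl
  have hCD : ∀ x y, i ≤ x → x ≤ y → y ≤ j → C x y = D x y := fun x y hix hxy hyj => by
    rw [hD, if_pos ⟨hix, hxy.trans hyj, hix.trans hxy, hyj⟩]
  exact hC.aeval_apply_eq_of_apply_eq hDtri hCD f le_rfl le_rfl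

/-- Let `C^{[i,j]}` (called `D`) be obtained from the upper triangular matrix `C`
by replacing all entries with row- or column-index outside `[i,j]` by zeros.
Then for every scalar polynomial `f ∈ R[x]`, the `(i,j)`-entry of `f(C)` equals
the `(i,j)`-entry of `f(C^{[i,j]})`. -/
theorem stmt4 (n : ℕ) (R : Type*) [CommRing R] (C : Matrix (Fin n) (Fin n) R)
    (hC : C.BlockTriangular id) (i j : Fin n) (hij : i ≤ j)
    (D : Matrix (Fin n) (Fin n) R)
    (hD : ∀ a b, D a b = if i ≤ a ∧ a ≤ j ∧ i ≤ b ∧ b ≤ j then C a b else 0)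
    (f : Polynomial R) :
    (Polynomial.aeval C f) i j = (Polynomial.aeval D f) i j :=
  stmt4_general n R C hC i j D hD f
end

section
/- Let f ∈ (T_n(R))[x] with coefficients F_k = (f_{ij}^{(k)}), set f_{ih} := Σ_k f_{ih}^{(k)} x^k ∈ R[x], and let C ∈ T_n(R). Then for 1 ≤ i ≤ j ≤ n, the (i,j)-entry of f(C) := Σ_k F_k C^k equals Σ_{h=i}^{j} [f_{ih}(C)]_{h j}, where [f_{ih}(C)]_{h j} denotes the (h,j)-entry of the evaluation of the scalar polynomial f_{ih} at C. -/
open Finset Polynomial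

theorem Matrix.BlockTriangular.mul_apply_eq_sum_Icc {m R : Type*} [Fintype m] [LinearOrder m]
    [LocallyFiniteOrder m] [NonUnitalNonAssocSemiring R] {A B : Matrix m m R}
    (hA : A.BlockTriangular id) (hB : B.BlockTriangular id) (i j : m) :
    (A * B) i j = ∑ h ∈ Icc i j, A i h * B h j := by
  rw [Matrix.mul_apply]
  refine (sum_subset (subset_univ _) fun h _ hh => ?_).symm
  rcases not_and_or.mp (mem_Icc.not.mp hh) with hh | hh
  · rw [hA (not_le.mp hh), zero_mul]
  · rw [hB (not_le.mp hh), mul_zero]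

theorem Polynomial.aeval_sum_C_mul_X_pow {R A : Type*} [CommSemiring R] [Semiring A] [Algebra R A]
    (x : A) (s : Finset ℕ) (a : ℕ → R) :
    aeval x (∑ k ∈ s, C (a k) * X ^ k) = ∑ k ∈ s, a k • x ^ k := by
  simp only [map_sum, map_mul, aeval_C, map_pow, aeval_X, Algebra.smul_def]

theorem stmt5_general (n : ℕ) (R : Type*) [CommRing R]
    (f : Polynomial (Matrix (Fin n) (Fin n) R))
    (hf : ∀ k, (f.coeff k).BlockTriangular id)
    (C : Matrix (Fin n) (Fin n) R) (hC : C.BlockTriangular id)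
    (i j : Fin n) :
    f.eval C i j =
      ∑ h ∈ Finset.Icc i j,
        (Polynomial.aeval C
          (∑ k ∈ f.support, Polynomial.C (f.coeff k i h) * Polynomial.X ^ k)) h j := by
  calc f.eval C i j = ∑ k ∈ f.support, (f.coeff k * C ^ k) i j := by
        rw [eval_eq_sum, Polynomial.sum_def, Matrix.sum_apply]
    _ = ∑ k ∈ f.support, ∑ h ∈ Icc i j, f.coeff k i h * (C ^ k) h j := by
        simp only [(hf _).mul_apply_eq_sum_Icc (hC.pow _)]
    _ = _ := by
        rw [sum_comm]
        simp only [aeval_sum_C_mul_X_pow, Matrix.sum_apply, Matrix.smul_apply, smul_eq_mul]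

/-- For `f ∈ (Tₙ(R))[x]` with coefficients `F_k` and `C ∈ Tₙ(R)`, and `i ≤ j`,
the `(i,j)`-entry of the right evaluation `f(C) = Σ_k F_k C^k` equals
`Σ_{h=i}^{j} [f_{ih}(C)]_{hj}`, where `f_{ih} = Σ_k (F_k)_{ih} x^k ∈ R[x]`. -/
theorem stmt5 (n : ℕ) (R : Type*) [CommRing R]
    (f : Polynomial (Matrix (Fin n) (Fin n) R))
    (hf : ∀ k, (f.coeff k).BlockTriangular id)
    (C : Matrix (Fin n) (Fin n) R) (hC : C.BlockTriangular id)
    (i j : Fin n) (hij : i ≤ j) :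
    f.eval C i j =
      ∑ h ∈ Finset.Icc i j,
        (Polynomial.aeval C
          (∑ k ∈ f.support, Polynomial.C (f.coeff k i h) * Polynomial.X ^ k)) h j :=
  stmt5_general n R f hf C hC i j
end

section
/- Let f ∈ (T_n(R))[x] with coefficients F_k = (f_{ij}^{(k)}), set f_{hj} := Σ_k f_{hj}^{(k)} x^k ∈ R[x], and let C ∈ T_n(R). Then for 1 ≤ i ≤ j ≤ n, the (i,j)-entry of the left evaluation f(C)_ℓ := Σ_k C^k F_k equals Σ_{h=i}^{j} [f_{hj}(C)]_{i h}. -/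
/-!
Since `C ^ k` and `F_k` are upper triangular, only indices `i ≤ h ≤ j` contribute to
`(C ^ k * F_k) i j = Σ_h (C ^ k) i h * (F_k) h j`; exchanging the sums over `k` and `h`
regroups the terms with fixed `h` into the `(i, h)` entry of the scalar polynomial `f_{hj}`
evaluated at `C`.
-/

open Finset Polynomial

namespace Matrix

theorem BlockTriangular.mul_apply_eq_sum_Icc_s6 {ι R : Type*} [Fintype ι] [LinearOrder ι]
    [LocallyFiniteOrder ι] [NonUnitalNonAssocSemiring R] {A B : Matrix ι ι R}
    (hA : A.BlockTriangular id) (hB : B.BlockTriangular id) (i j : ι) :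
    (A * B) i j = ∑ h ∈ Icc i j, A i h * B h j := by
  rw [mul_apply, ← sum_subset (subset_univ (Icc i j))]
  intro h _ hh
  rcases not_and_or.mp (mem_Icc.not.mp hh) with hih | hhj
  · rw [hA (not_le.mp hih), zero_mul]
  · rw [hB (not_le.mp hhj), mul_zero]

theorem aeval_sum_C_mul_X_pow_apply {n R : Type*} [Fintype n] [DecidableEq n] [CommSemiring R]
    (C : Matrix n n R) (s : Finset ℕ) (a : ℕ → R) (i j : n) :
    aeval C (∑ k ∈ s, Polynomial.C (a k) * X ^ k) i j = ∑ k ∈ s, a k * (C ^ k) i j := by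
  simp [map_sum, sum_apply, Algebra.algebraMap_eq_smul_one]

end Matrix

theorem stmt6_general (n : ℕ) (R : Type*) [CommRing R]
    (f : Polynomial (Matrix (Fin n) (Fin n) R))
    (hf : ∀ k, (f.coeff k).BlockTriangular id)
    (C : Matrix (Fin n) (Fin n) R) (hC : C.BlockTriangular id)
    (i j : Fin n) :
    (∑ k ∈ f.support, C ^ k * f.coeff k) i j =
      ∑ h ∈ Finset.Icc i j,
        (Polynomial.aeval C
          (∑ k ∈ f.support, Polynomial.C (f.coeff k h j) * Polynomial.X ^ k)) i h := by
  calc (∑ k ∈ f.support, C ^ k * f.coeff k) i j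
      = ∑ k ∈ f.support, ∑ h ∈ Icc i j, (C ^ k) i h * f.coeff k h j := by
        rw [Matrix.sum_apply]
        exact sum_congr rfl fun k _ => (hC.pow k).mul_apply_eq_sum_Icc_s6 (hf k) i j
    _ = ∑ h ∈ Icc i j, ∑ k ∈ f.support, f.coeff k h j * (C ^ k) i h := by
        rw [sum_comm]
        simp only [mul_comm]
    _ = _ := by simp only [Matrix.aeval_sum_C_mul_X_pow_apply]

/-- For `f ∈ (Tₙ(R))[x]` with coefficients `F_k` and `C ∈ Tₙ(R)`, and `i ≤ j`,
the `(i,j)`-entry of the left evaluation `f(C)_ℓ = Σ_k C^k F_k` equals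
`Σ_{h=i}^{j} [f_{hj}(C)]_{ih}`, where `f_{hj} = Σ_k (F_k)_{hj} x^k ∈ R[x]`. -/
theorem stmt6 (n : ℕ) (R : Type*) [CommRing R]
    (f : Polynomial (Matrix (Fin n) (Fin n) R))
    (hf : ∀ k, (f.coeff k).BlockTriangular id)
    (C : Matrix (Fin n) (Fin n) R) (hC : C.BlockTriangular id)
    (i j : Fin n) (hij : i ≤ j) :
    (∑ k ∈ f.support, C ^ k * f.coeff k) i j =
      ∑ h ∈ Finset.Icc i j,
        (Polynomial.aeval C
          (∑ k ∈ f.support, Polynomial.C (f.coeff k h j) * Polynomial.X ^ k)) i h :=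
  stmt6_general n R f hf C hC i j
end

section
/- Let S be a subring of a commutative ring R, I an ideal of S, f ∈ (T_n(R))[x], and fix 1 ≤ i ≤ j ≤ n. Then the (i,j)-entry of f(C) lies in I for all C ∈ T_n(S) if and only if for every h with i ≤ h ≤ j, the (h,j)-entry of f_{ih}(C) lies in I for all C ∈ T_n(S), where f_{ih} ∈ R[x] is the scalar polynomial formed from the (i,h)-entries of the coefficients of f. -/
/-!
Because the coefficients of `f` and the matrix `C` are upper triangular,
`f(C)_{ij} = ∑_{i ≤ h ≤ j} f_{ih}(C)_{hj}`, which gives one direction. Conversely, zeroing the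
rows of `C` outside an upper set `P` of indices containing `j` gives another matrix of `T_n(S)`,
whose powers agree with those of `C` on the rows in `P` and vanish off the diagonal on the other
rows; evaluating `f` there picks out the partial sum over `h ∈ P`. The difference of the partial
sums for `P = [h, ∞)` and `P = (h, ∞)` is `f_{ih}(C)_{hj}`.
-/

open Polynomial Finset

section

variable {ι R : Type*}

namespace Matrix

section Zero

variable [Zero R] {M : Matrix ι ι R} {P : Set ι}

open Classical in
noncomputable def keepRows (M : Matrix ι ι R) (P : Set ι) : Matrix ι ι R :=
  of fun a b => if a ∈ P then M a b else 0

theorem keepRows_apply_of_mem {a : ι} (ha : a ∈ P) (b : ι) : M.keepRows P a b = M a b := by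
  simp [keepRows, ha]

theorem keepRows_apply_of_notMem {a : ι} (ha : a ∉ P) (b : ι) : M.keepRows P a b = 0 := by
  simp [keepRows, ha]

theorem BlockTriangular.keepRows {α : Type*} [LT α] {b : ι → α} (hM : M.BlockTriangular b)
    (P : Set ι) : (M.keepRows P).BlockTriangular b := by
  intro a c hac
  by_cases ha : a ∈ P
  · rw [keepRows_apply_of_mem ha, hM hac]
  · rw [keepRows_apply_of_notMem ha]

end Zero

variable [Fintype ι] [LinearOrder ι] [CommSemiring R] {M : Matrix ι ι R} {P : Set ι}

theorem pow_keepRows_apply_of_mem (hM : M.BlockTriangular id) (hP : IsUpperSet P) (k : ℕ)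
    {a : ι} (ha : a ∈ P) (b : ι) : (M.keepRows P ^ k) a b = (M ^ k) a b := by
  induction k generalizing a with
  | zero => rfl
  | succ k ih =>
    simp only [pow_succ', mul_apply, keepRows_apply_of_mem ha]
    refine sum_congr rfl fun c _ => ?_
    rcases lt_or_ge c a with hca | hac
    · rw [hM hca, zero_mul, zero_mul]
    · rw [ih (hP hac ha)]

theorem pow_keepRows_apply_of_notMem (k : ℕ) {a b : ι} (ha : a ∉ P) (hab : a ≠ b) :
    (M.keepRows P ^ k) a b = 0 := by
  cases k with
  | zero => exact one_apply_ne hab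
  | succ k =>
    simp only [pow_succ', mul_apply, keepRows_apply_of_notMem ha, zero_mul, sum_const_zero]

end Matrix

namespace Polynomial

variable [Fintype ι] [LinearOrder ι] [CommSemiring R]

noncomputable def entryPoly (f : (Matrix ι ι R)[X]) (a b : ι) : R[X] :=
  ∑ k ∈ f.support, C (f.coeff k a b) * X ^ k

theorem aeval_entryPoly_apply (f : (Matrix ι ι R)[X]) (M : Matrix ι ι R) (a b c d : ι) :
    aeval M (entryPoly f a b) c d = ∑ k ∈ f.support, f.coeff k a b * (M ^ k) c d := by
  simp only [entryPoly, map_sum, map_mul, aeval_C, map_pow, aeval_X, Matrix.sum_apply,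
    ← Algebra.smul_def, Matrix.smul_apply, smul_eq_mul]

theorem eval_apply_eq_sum_aeval_entryPoly (f : (Matrix ι ι R)[X]) (M : Matrix ι ι R) (a d : ι) :
    f.eval M a d = ∑ h, aeval M (entryPoly f a h) h d := by
  simp only [eval_eq_sum, Polynomial.sum_def, Matrix.sum_apply, Matrix.mul_apply,
    aeval_entryPoly_apply]
  exact sum_comm

variable [LocallyFiniteOrder ι] {f : (Matrix ι ι R)[X]} {M : Matrix ι ι R}

theorem eval_apply_eq_sum_Icc (hf : ∀ k, (f.coeff k).BlockTriangular id)
    (hM : M.BlockTriangular id) (a d : ι) :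
    f.eval M a d = ∑ h ∈ Icc a d, aeval M (entryPoly f a h) h d := by
  rw [eval_apply_eq_sum_aeval_entryPoly]
  symm
  refine sum_subset (subset_univ _) fun h _ hh => ?_
  rw [aeval_entryPoly_apply]
  refine sum_eq_zero fun k _ => ?_
  rcases not_and_or.mp (mt mem_Icc.mpr hh) with hh | hh
  · rw [hf k (show id h < id a from not_le.mp hh), zero_mul]
  · rw [hM.pow k (show id d < id h from not_le.mp hh), mul_zero]

open Classical in
theorem eval_keepRows_apply (hf : ∀ k, (f.coeff k).BlockTriangular id)
    (hM : M.BlockTriangular id) {P : Set ι} (hP : IsUpperSet P) (i : ι) {j : ι} (hj : j ∈ P) :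
    f.eval (M.keepRows P) i j = ∑ h ∈ Icc i j with h ∈ P, aeval M (entryPoly f i h) h j := by
  rw [eval_apply_eq_sum_Icc hf (hM.keepRows P), sum_filter]
  refine sum_congr rfl fun h _ => ?_
  simp only [aeval_entryPoly_apply]
  split_ifs with hh
  · simp only [Matrix.pow_keepRows_apply_of_mem hM hP _ hh]
  · simp only [Matrix.pow_keepRows_apply_of_notMem _ hh (ne_of_mem_of_not_mem hj hh).symm,
      mul_zero, sum_const_zero]

end Polynomial

theorem eval_apply_mem_iff_aeval_entryPoly_mem [Fintype ι] [LinearOrder ι] [LocallyFiniteOrder ι]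
    [CommRing R] {S : Set R} (hS : 0 ∈ S) (K : AddSubgroup R) {f : (Matrix ι ι R)[X]}
    (hf : ∀ k, (f.coeff k).BlockTriangular id) (i j : ι) :
    (∀ C : Matrix ι ι R, C.BlockTriangular id → (∀ a b, C a b ∈ S) → f.eval C i j ∈ K) ↔
      ∀ h ∈ Icc i j, ∀ C : Matrix ι ι R, C.BlockTriangular id → (∀ a b, C a b ∈ S) →
        aeval C (entryPoly f i h) h j ∈ K := by
  classical
  constructor
  · intro H h hh C hC hCS
    have partial_sum_mem (P : Set ι) (hP : IsUpperSet P) (hj : j ∈ P) :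
        ∑ h ∈ Icc i j with h ∈ P, aeval C (entryPoly f i h) h j ∈ K := by
      rw [← eval_keepRows_apply hf hC hP i hj]
      refine H _ (hC.keepRows P) fun a b => ?_
      by_cases ha : a ∈ P
      · rw [Matrix.keepRows_apply_of_mem ha]; exact hCS a b
      · rw [Matrix.keepRows_apply_of_notMem ha]; exact hS
    obtain ⟨hih, hhj⟩ := mem_Icc.mp hh
    have hIcc : ∑ h' ∈ Icc h j, aeval C (entryPoly f i h') h' j ∈ K := by
      convert partial_sum_mem (Set.Ici h) (isUpperSet_Ici h) hhj using 2
      ext; grind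
    have hIoc : ∑ h' ∈ Ioc h j, aeval C (entryPoly f i h') h' j ∈ K := by
      rcases hhj.lt_or_eq with hlt | rfl
      · convert partial_sum_mem (Set.Ioi h) (isUpperSet_Ioi h) hlt using 2
        ext; grind
      · simp
    rw [← Ioc_insert_left hhj, sum_insert left_notMem_Ioc] at hIcc
    simpa using K.sub_mem hIcc hIoc
  · intro H C hC hCS
    rw [eval_apply_eq_sum_Icc hf hC]
    exact K.sum_mem fun h hh => H h hh C hC hCS

end

theorem stmt7_general (n : ℕ) (R : Type*) [CommRing R] (S : Subring R) (I : Ideal S)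
    (f : Polynomial (Matrix (Fin n) (Fin n) R))
    (hf : ∀ k, (f.coeff k).BlockTriangular id)
    (i j : Fin n) :
    (∀ C : Matrix (Fin n) (Fin n) R, C.BlockTriangular id → (∀ a b, C a b ∈ S) →
        ∃ s ∈ I, (s : R) = f.eval C i j)
    ↔ ∀ h ∈ Finset.Icc i j,
        ∀ C : Matrix (Fin n) (Fin n) R, C.BlockTriangular id → (∀ a b, C a b ∈ S) →
          ∃ s ∈ I, (s : R) =
            (Polynomial.aeval C
              (∑ k ∈ f.support, Polynomial.C (f.coeff k i h) * Polynomial.X ^ k)) h j := by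
  have mem_image_iff (r : R) :
      (∃ s ∈ I, (s : R) = r) ↔ r ∈ I.toAddSubgroup.map S.subtype.toAddMonoidHom := by
    simp
  simp only [mem_image_iff]
  exact eval_apply_mem_iff_aeval_entryPoly_mem S.zero_mem _ hf i j

/-- Let `S` be a subring of `R`, `I` an ideal of `S`, `f ∈ (Tₙ(R))[x]`, `i ≤ j`.
The `(i,j)`-entry of `f(C)` lies in `I` for all `C ∈ Tₙ(S)` iff for every `h` with
`i ≤ h ≤ j`, the `(h,j)`-entry of `f_{ih}(C)` lies in `I` for all `C ∈ Tₙ(S)`. -/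
theorem stmt7 (n : ℕ) (R : Type*) [CommRing R] (S : Subring R) (I : Ideal S)
    (f : Polynomial (Matrix (Fin n) (Fin n) R))
    (hf : ∀ k, (f.coeff k).BlockTriangular id)
    (i j : Fin n) (hij : i ≤ j) :
    (∀ C : Matrix (Fin n) (Fin n) R, C.BlockTriangular id → (∀ a b, C a b ∈ S) →
        ∃ s ∈ I, (s : R) = f.eval C i j)
    ↔ ∀ h ∈ Finset.Icc i j,
        ∀ C : Matrix (Fin n) (Fin n) R, C.BlockTriangular id → (∀ a b, C a b ∈ S) →
          ∃ s ∈ I, (s : R) =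
            (Polynomial.aeval C
              (∑ k ∈ f.support, Polynomial.C (f.coeff k i h) * Polynomial.X ^ k)) h j :=
  stmt7_general n R S I f hf i j
end

section
/- Let S be a subring of a commutative ring R and I an ideal of S. For a scalar polynomial f ∈ R[x], 1 ≤ i ≤ j ≤ n, and m ≥ 0: the set of values {[f(C)]_{i j} : C ∈ T_n(S)} equals the set of values {[f(C)]_{i+m, j+m} : C ∈ T_{n+m}(S)}, i.e., the image of the (i,j)-entry of f evaluated on upper triangular matrices with entries in S depends only on f and j − i. -/
/-!
If `e : β → α` is injective and its range is an upper set, then taking the `e × e`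
corner of an upper triangular matrix is multiplicative: in `(A * B) (e a) (e b)` only indices
`c ≥ e a` contribute, and those all lie in the range of `e`. Hence the corner is an algebra
homomorphism on upper triangular matrices and commutes with evaluating `f`. Every upper
triangular matrix on `β` is such a corner (extend it by zero), so both sets of entries agree.
-/

open Function Polynomial

namespace Matrix

variable {α β R : Type*} {e : β → α}

section Corner

variable [LinearOrder α] [Fintype α] [CommSemiring R]

theorem submatrix_mul_of_blockTriangular [Fintype β] {A : Matrix α α R} (B : Matrix α α R)
    (hA : A.BlockTriangular id) (he : Injective e) (hup : IsUpperSet (Set.range e)) :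
    (A * B).submatrix e e = A.submatrix e e * B.submatrix e e := by
  ext a b
  refine (Fintype.sum_of_injective e he _ _ (fun c hc => ?_) fun c => rfl).symm
  have hlt : c < e a := lt_of_not_ge fun h => hc (hup h ⟨a, rfl⟩)
  simp [hA hlt]

variable [DecidableEq α] [Fintype β] [DecidableEq β]

variable (R) in
def cornerAlgHom (he : Injective e) (hup : IsUpperSet (Set.range e)) :
    blockTriangularSubalgebra R R (id : α → α) →ₐ[R] Matrix β β R where
  toFun A := (A : Matrix α α R).submatrix e e
  map_one' := submatrix_one e he
  map_mul' A B := submatrix_mul_of_blockTriangular (B : Matrix α α R) A.2 he hup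
  map_zero' := rfl
  map_add' _ _ := rfl
  commutes' r := by
    ext a b
    simp [algebraMap_matrix_apply, he.eq_iff]

theorem aeval_submatrix_of_blockTriangular {A : Matrix α α R} (hA : A.BlockTriangular id)
    (he : Injective e) (hup : IsUpperSet (Set.range e)) (f : R[X]) :
    aeval (A.submatrix e e) f = (aeval A f).submatrix e e := by
  let A' : blockTriangularSubalgebra R R id := ⟨A, hA⟩
  calc aeval (A.submatrix e e) f = aeval (cornerAlgHom R he hup A') f := rfl
    _ = cornerAlgHom R he hup (aeval A' f) := aeval_algHom_apply _ _ _
    _ = (aeval A f).submatrix e e := congrArg (submatrix · e e) (aeval_subalgebra_coe f _ A')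

end Corner

section ExtendByZero

variable [Zero R]

noncomputable def extendByZero (e : β → α) (C : Matrix β β R) : Matrix α α R :=
  of fun a b => extend (Prod.map e e) (uncurry C) 0 (a, b)

theorem extendByZero_apply_apply (C : Matrix β β R) (he : Injective e) (a b : β) :
    C.extendByZero e (e a) (e b) = C a b :=
  (he.prodMap he).extend_apply (uncurry C) 0 (a, b)

theorem extendByZero_apply_of_notMem_range (C : Matrix β β R) {a b : α}
    (h : (a, b) ∉ Set.range (Prod.map e e)) : C.extendByZero e a b = 0 :=
  extend_apply' _ _ _ h

theorem submatrix_extendByZero (C : Matrix β β R) (he : Injective e) :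
    (C.extendByZero e).submatrix e e = C := by
  ext a b
  exact extendByZero_apply_apply C he a b

theorem extendByZero_apply_mem {s : Set R} (h0 : (0 : R) ∈ s) {C : Matrix β β R}
    (hC : ∀ a b, C a b ∈ s) (a b : α) : C.extendByZero e a b ∈ s := by
  classical
  rw [extendByZero, of_apply, extend_def]
  split_ifs
  exacts [hC _ _, h0]

theorem BlockTriangular.extendByZero [LinearOrder α] [LinearOrder β] {C : Matrix β β R}
    (hC : C.BlockTriangular id) (he : StrictMono e) :
    (C.extendByZero e).BlockTriangular id := by
  intro a b hba
  by_cases hab : (a, b) ∈ Set.range (Prod.map e e)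
  · obtain ⟨⟨a', b'⟩, hab⟩ := hab
    obtain ⟨rfl, rfl⟩ := Prod.mk.inj hab
    rw [extendByZero_apply_apply C he.injective]
    exact hC (he.lt_iff_lt.mp hba)
  · exact extendByZero_apply_of_notMem_range C hab

end ExtendByZero

end Matrix

theorem Fin.isUpperSet_range_addNat (n m : ℕ) :
    IsUpperSet (Set.range (Fin.addNat · m : Fin n → Fin (n + m))) := by
  rintro _ d hd ⟨a, rfl⟩
  have hd' : (a : ℕ) + m ≤ d := hd
  exact ⟨⟨d - m, by omega⟩, Fin.ext (by simp; omega)⟩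

/-- For a scalar polynomial `f ∈ R[x]`, `i ≤ j` in `Fin n`, and `m ≥ 0`, the set of
values of the `(i,j)`-entry of `f(C)` as `C` ranges over `Tₙ(S)` equals the set of
values of the `(i+m, j+m)`-entry of `f(C)` as `C` ranges over `T_{n+m}(S)`. -/
theorem stmt9 (n m : ℕ) (R : Type*) [CommRing R] (S : Subring R) (f : Polynomial R)
    (i j : Fin n) :
    {r : R | ∃ C : Matrix (Fin n) (Fin n) R, C.BlockTriangular id ∧
        (∀ a b, C a b ∈ S) ∧ (Polynomial.aeval C f) i j = r}
    = {r : R | ∃ C : Matrix (Fin (n + m)) (Fin (n + m)) R, C.BlockTriangular id ∧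
        (∀ a b, C a b ∈ S) ∧
        (Polynomial.aeval C f) ⟨i + m, by omega⟩ ⟨j + m, by omega⟩ = r} := by
  set e : Fin n → Fin (n + m) := (Fin.addNat · m)
  have he : StrictMono e := Fin.strictMono_addNat m
  have hup : IsUpperSet (Set.range e) := Fin.isUpperSet_range_addNat n m
  ext r
  constructor
  · rintro ⟨C, hC, hS, rfl⟩
    have hD := hC.extendByZero he
    refine ⟨C.extendByZero e, hD, Matrix.extendByZero_apply_mem S.zero_mem hS, ?_⟩
    have key := Matrix.aeval_submatrix_of_blockTriangular hD he.injective hup f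
    rw [Matrix.submatrix_extendByZero C he.injective] at key
    exact (congr_fun₂ key i j).symm
  · rintro ⟨D, hD, hS, rfl⟩
    refine ⟨D.submatrix e e, fun a b hba => hD (he hba), fun a b => hS _ _, ?_⟩
    exact congr_fun₂ (Matrix.aeval_submatrix_of_blockTriangular hD he.injective hup f) i j
end

section
/- Let S be a subring of a commutative ring R and I an ideal of S, and define Int_k := {g ∈ R[x] : g(C) ∈ T_k(I) for all C ∈ T_k(S)}. Then Int_m ⊆ Int_k whenever m ≥ k. -/
/-!
A matrix `C ∈ T_k(S)` is the top left corner of `diag(C, 0) ∈ T_m(S)`, and evaluating a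
polynomial at a block diagonal matrix evaluates it blockwise, so the entries of `g(C)` are
entries of `g(diag(C, 0))` and lie in `I`. That `g(C)` is upper triangular needs nothing about
`g`: upper triangular matrices form a subalgebra.
-/

open Polynomial

namespace Matrix

section PadZero

variable {α : Type*} [Zero α] {k : ℕ}

def padZero (C : Matrix (Fin k) (Fin k) α) (n : ℕ) : Matrix (Fin (k + n)) (Fin (k + n)) α :=
  reindex finSumFinEquiv finSumFinEquiv (fromBlocks C 0 0 0)

variable {C : Matrix (Fin k) (Fin k) α}

theorem BlockTriangular.padZero (hC : C.BlockTriangular id) (n : ℕ) :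
    (C.padZero n).BlockTriangular id := by
  rw [Matrix.padZero, blockTriangular_reindex_iff]
  rintro (i | i) (j | j) hij
  · simpa using hC (Fin.lt_def.mpr (Fin.lt_def.mp hij))
  all_goals simp

theorem padZero_apply_mem {s : Set α} (h0 : (0 : α) ∈ s) (hC : ∀ a b, C a b ∈ s) (n : ℕ)
    (i j : Fin (k + n)) : C.padZero n i j ∈ s := by
  rcases hi : finSumFinEquiv.symm i with a | a <;> rcases hj : finSumFinEquiv.symm j with b | b <;>
    simp_all [Matrix.padZero]

end PadZero

variable {R α : Type*} [CommSemiring R] [Semiring α] [Algebra R α]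

theorem BlockTriangular.aeval {m β : Type*} [Fintype m] [DecidableEq m] [LinearOrder β]
    {M : Matrix m m α} {b : m → β} (hM : M.BlockTriangular b) (p : R[X]) :
    (Polynomial.aeval M p).BlockTriangular b :=
  Algebra.adjoin_le (S := blockTriangularSubalgebra R α b) (Set.singleton_subset_iff.mpr hM)
    (aeval_mem_adjoin_singleton R M)

theorem aeval_fromBlocks_zero_zero {n o : Type*} [Fintype n] [DecidableEq n] [Fintype o]
    [DecidableEq o] (A : Matrix n n α) (D : Matrix o o α) (p : R[X]) :
    Polynomial.aeval (fromBlocks A 0 0 D) p =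
      fromBlocks (Polynomial.aeval A p) 0 0 (Polynomial.aeval D p) := by
  induction p using Polynomial.induction_on' with
  | add p q hp hq => simp only [map_add, hp, hq, fromBlocks_add, add_zero]
  | monomial n a =>
    simp only [aeval_monomial, ← Algebra.smul_def, fromBlocks_diagonal_pow, fromBlocks_smul,
      smul_zero]

theorem aeval_padZero_castAdd {k : ℕ} (C : Matrix (Fin k) (Fin k) α) (p : R[X]) (n : ℕ)
    (a b : Fin k) :
    Polynomial.aeval (C.padZero n) p (Fin.castAdd n a) (Fin.castAdd n b) =
      Polynomial.aeval C p a b := by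
  rw [padZero, ← coe_reindexAlgEquiv R, aeval_algHom_apply, coe_reindexAlgEquiv,
    aeval_fromBlocks_zero_zero]
  simp

end Matrix

/-- With `Int_k := {g ∈ R[x] : g(C) ∈ T_k(I) for all C ∈ T_k(S)}`, we have
`Int_m ⊆ Int_k` whenever `m ≥ k`. -/
theorem stmt11 (R : Type*) [CommRing R] (S : Subring R) (I : Ideal S)
    (m k : ℕ) (hkm : k ≤ m) (g : Polynomial R)
    (hg : ∀ C : Matrix (Fin m) (Fin m) R, C.BlockTriangular id → (∀ a b, C a b ∈ S) →
        (Polynomial.aeval C g).BlockTriangular id ∧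
          ∀ a b : Fin m, ∃ s ∈ I, (s : R) = (Polynomial.aeval C g) a b) :
    ∀ C : Matrix (Fin k) (Fin k) R, C.BlockTriangular id → (∀ a b, C a b ∈ S) →
        (Polynomial.aeval C g).BlockTriangular id ∧
          ∀ a b : Fin k, ∃ s ∈ I, (s : R) = (Polynomial.aeval C g) a b := by
  intro C hCt hCS
  obtain ⟨n, rfl⟩ := Nat.exists_eq_add_of_le hkm
  refine ⟨hCt.aeval g, fun a b => ?_⟩
  obtain ⟨s, hs, hsv⟩ := (hg _ (hCt.padZero n) (Matrix.padZero_apply_mem S.zero_mem hCS n)).2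
    (Fin.castAdd n a) (Fin.castAdd n b)
  exact ⟨s, hs, hsv.trans (Matrix.aeval_padZero_castAdd C g n a b)⟩
end

section
/- Let D be a domain with quotient field K and define Int_k := {g ∈ K[x] : g(C) ∈ T_k(D) for all C ∈ T_k(D)}. Then Int_i · Int_j ⊆ Int_{min(i,j)}. -/
/-!
`T_k(D)` is a subring of the `k × k` matrices over `K`, so `Int_k` is a subring of `K[x]`.
Moreover `Int_n ⊆ Int_m` for `m ≤ n`: if `C ∈ T_m(D)` then `diag(C, 0) ∈ T_n(D)`, and
`g(diag(C, 0)) = diag(g(C), g(0))`, so `g(C) ∈ T_m(D)` whenever `g ∈ Int_n`.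
Hence `Int_i · Int_j ⊆ Int_min(i,j) · Int_min(i,j) ⊆ Int_min(i,j)`.
-/

open Polynomial

namespace Matrix

section BlockDiagonal

variable {R α : Type*} {m n : Type*}

theorem blockTriangular_fromBlocks_zero_zero_iff [Zero R] [LT α] {A : Matrix m m R}
    {B : Matrix n n R} {b : m ⊕ n → α} :
    (fromBlocks A 0 0 B).BlockTriangular b ↔
      A.BlockTriangular (b ∘ Sum.inl) ∧ B.BlockTriangular (b ∘ Sum.inr) := by
  refine ⟨fun h => ⟨fun i j hij => h (i := .inl i) (j := .inl j) hij,
    fun i j hij => h (i := .inr i) (j := .inr j) hij⟩, fun ⟨hA, hB⟩ => ?_⟩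
  rintro (i | i) (j | j) hij
  exacts [hA hij, rfl, rfl, hB hij]

theorem blockTriangular_comp_strictMono_iff [Zero R] [LinearOrder α] {β : Type*}
    [LinearOrder β] {M : Matrix m m R} {b : m → α} {f : α → β} (hf : StrictMono f) :
    M.BlockTriangular (f ∘ b) ↔ M.BlockTriangular b := by
  simp only [BlockTriangular, Function.comp_apply, hf.lt_iff_lt]

theorem fromBlocks_zero_zero_mem_matrix_iff [Zero R] {S : Set R} (hS : 0 ∈ S)
    {A : Matrix m m R} {B : Matrix n n R} :
    fromBlocks A 0 0 B ∈ S.matrix ↔ A ∈ S.matrix ∧ B ∈ S.matrix := by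
  simp only [Set.mem_matrix, Sum.forall, fromBlocks_apply₁₁, fromBlocks_apply₁₂,
    fromBlocks_apply₂₁, fromBlocks_apply₂₂, zero_apply, hS, implies_true, and_true, true_and]

variable (R m n) [CommSemiring R] [Fintype m] [Fintype n] [DecidableEq m] [DecidableEq n]

def fromBlocksDiagonalAlgHom : Matrix m m R × Matrix n n R →ₐ[R] Matrix (m ⊕ n) (m ⊕ n) R where
  toFun AB := fromBlocks AB.1 0 0 AB.2
  map_one' := fromBlocks_one
  map_mul' _ _ := by simp [fromBlocks_multiply]
  map_zero' := fromBlocks_zero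
  map_add' _ _ := by simp [fromBlocks_add]
  commutes' r := by
    simp only [Algebra.algebraMap_eq_smul_one, ← fromBlocks_one, fromBlocks_smul, smul_zero]
    rfl

variable {R m n}

theorem aeval_fromBlocks_zero_zero_s12 (A : Matrix m m R) (B : Matrix n n R) (p : R[X]) :
    aeval (fromBlocks A 0 0 B) p = fromBlocks (aeval A p) 0 0 (aeval B p) := by
  have h := aeval_algHom_apply (fromBlocksDiagonalAlgHom R m n) (A, B) p
  rwa [aeval_prod_apply] at h

end BlockDiagonal

variable (D K : Type*) [CommSemiring D] [CommSemiring K] [Algebra D K]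

/-- The ring `T_ι(D)`. -/
def upperTriangularOver (ι : Type*) [Fintype ι] [DecidableEq ι] [LinearOrder ι] :
    Subsemiring (Matrix ι ι K) :=
  blockTriangularSubsemiring K id ⊓ (algebraMap D K).rangeS.matrix

variable {D K}

theorem mem_upperTriangularOver {ι : Type*} [Fintype ι] [DecidableEq ι] [LinearOrder ι]
    {M : Matrix ι ι K} :
    M ∈ upperTriangularOver D K ι ↔
      M.BlockTriangular id ∧ M ∈ (Set.range (algebraMap D K)).matrix :=
  Iff.rfl

theorem reindex_fromBlocks_zero_zero_mem_upperTriangularOver_iff {m k : ℕ}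
    {A : Matrix (Fin m) (Fin m) K} {B : Matrix (Fin k) (Fin k) K} :
    reindex finSumFinEquiv finSumFinEquiv (fromBlocks A 0 0 B) ∈
        upperTriangularOver D K (Fin (m + k)) ↔
      A ∈ upperTriangularOver D K (Fin m) ∧ B ∈ upperTriangularOver D K (Fin k) := by
  have hinl : (finSumFinEquiv : Fin m ⊕ Fin k ≃ _) ∘ Sum.inl = Fin.castAdd k := by
    funext; simp
  have hinr : (finSumFinEquiv : Fin m ⊕ Fin k ≃ _) ∘ Sum.inr = Fin.natAdd m := by
    funext; simp
  have hentries : reindex finSumFinEquiv finSumFinEquiv (fromBlocks A 0 0 B) ∈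
      (Set.range (algebraMap D K)).matrix ↔
      A ∈ (Set.range (algebraMap D K)).matrix ∧ B ∈ (Set.range (algebraMap D K)).matrix :=
    (submatrix_mem_matrix_iff finSumFinEquiv.symm.surjective
      finSumFinEquiv.symm.surjective).trans
      (fromBlocks_zero_zero_mem_matrix_iff (S := Set.range (algebraMap D K)) ⟨0, map_zero _⟩)
  have hA := blockTriangular_comp_strictMono_iff (M := A) (b := id) (Fin.strictMono_castAdd k)
  have hB := blockTriangular_comp_strictMono_iff (M := B) (b := id) (Fin.strictMono_natAdd m)
  rw [Function.comp_id] at hA hB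
  simp only [mem_upperTriangularOver, blockTriangular_reindex_iff, Function.id_comp,
    blockTriangular_fromBlocks_zero_zero_iff, hinl, hinr, hentries, hA, hB]
  tauto

end Matrix

namespace Polynomial

open Matrix

variable (D K : Type*) [CommSemiring D] [CommSemiring K] [Algebra D K]

/-- The ring `Int_ι`. -/
def intUpperTriangular (ι : Type*) [Fintype ι] [DecidableEq ι] [LinearOrder ι] :
    Subsemiring K[X] where
  carrier := {p | ∀ C ∈ upperTriangularOver D K ι, aeval C p ∈ upperTriangularOver D K ι}
  mul_mem' hp hq C hC := by simpa only [map_mul] using mul_mem (hp C hC) (hq C hC)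
  one_mem' C _ := by simpa only [map_one] using one_mem _
  add_mem' hp hq C hC := by simpa only [map_add] using add_mem (hp C hC) (hq C hC)
  zero_mem' C _ := by simpa only [map_zero] using zero_mem _

variable {D K}

theorem aeval_reindex {m n : Type*} [Fintype m] [Fintype n] [DecidableEq m] [DecidableEq n]
    (e : m ≃ n) (M : Matrix m m K) (p : K[X]) :
    aeval (reindex e e M) p = reindex e e (aeval M p) :=
  aeval_algHom_apply (reindexAlgEquiv K K e) M p

theorem intUpperTriangular_fin_antitone :
    Antitone fun n => intUpperTriangular D K (Fin n) := by
  intro m n hmn p hp C hC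
  obtain ⟨k, rfl⟩ := Nat.exists_eq_add_of_le hmn
  have hpad := reindex_fromBlocks_zero_zero_mem_upperTriangularOver_iff.mpr
    ⟨hC, zero_mem (upperTriangularOver D K (Fin k))⟩
  have hp_pad := hp _ hpad
  rw [aeval_reindex, aeval_fromBlocks_zero_zero_s12] at hp_pad
  exact (reindex_fromBlocks_zero_zero_mem_upperTriangularOver_iff.mp hp_pad).1

end Polynomial

theorem stmt12_general (D K : Type*) [CommRing D] [Field K] [Algebra D K]
    (i j : ℕ) (g h : Polynomial K)
    (hg : ∀ C : Matrix (Fin i) (Fin i) K, C.BlockTriangular id →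
        (∀ a b, C a b ∈ Set.range (algebraMap D K)) →
        (Polynomial.aeval C g).BlockTriangular id ∧
          ∀ a b, (Polynomial.aeval C g) a b ∈ Set.range (algebraMap D K))
    (hh : ∀ C : Matrix (Fin j) (Fin j) K, C.BlockTriangular id →
        (∀ a b, C a b ∈ Set.range (algebraMap D K)) →
        (Polynomial.aeval C h).BlockTriangular id ∧
          ∀ a b, (Polynomial.aeval C h) a b ∈ Set.range (algebraMap D K)) :
    ∀ C : Matrix (Fin (min i j)) (Fin (min i j)) K, C.BlockTriangular id →
        (∀ a b, C a b ∈ Set.range (algebraMap D K)) →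
        (Polynomial.aeval C (g * h)).BlockTriangular id ∧
          ∀ a b, (Polynomial.aeval C (g * h)) a b ∈ Set.range (algebraMap D K) := by
  have hg' : g ∈ Polynomial.intUpperTriangular D K (Fin i) := fun C hC => hg C hC.1 hC.2
  have hh' : h ∈ Polynomial.intUpperTriangular D K (Fin j) := fun C hC => hh C hC.1 hC.2
  have hgh : g * h ∈ Polynomial.intUpperTriangular D K (Fin (min i j)) :=
    mul_mem (Polynomial.intUpperTriangular_fin_antitone (min_le_left i j) hg')
      (Polynomial.intUpperTriangular_fin_antitone (min_le_right i j) hh')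
  exact fun C hCt hCD => hgh C ⟨hCt, hCD⟩

/-- Let `D` be a domain with quotient field `K` and
`Int_k := {g ∈ K[x] : g(C) ∈ T_k(D) for all C ∈ T_k(D)}`.
Then `Int_i · Int_j ⊆ Int_{min(i,j)}`. -/
theorem stmt12 (D K : Type*) [CommRing D] [IsDomain D] [Field K] [Algebra D K]
    [IsFractionRing D K] (i j : ℕ) (g h : Polynomial K)
    (hg : ∀ C : Matrix (Fin i) (Fin i) K, C.BlockTriangular id →
        (∀ a b, C a b ∈ Set.range (algebraMap D K)) →
        (Polynomial.aeval C g).BlockTriangular id ∧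
          ∀ a b, (Polynomial.aeval C g) a b ∈ Set.range (algebraMap D K))
    (hh : ∀ C : Matrix (Fin j) (Fin j) K, C.BlockTriangular id →
        (∀ a b, C a b ∈ Set.range (algebraMap D K)) →
        (Polynomial.aeval C h).BlockTriangular id ∧
          ∀ a b, (Polynomial.aeval C h) a b ∈ Set.range (algebraMap D K)) :
    ∀ C : Matrix (Fin (min i j)) (Fin (min i j)) K, C.BlockTriangular id →
        (∀ a b, C a b ∈ Set.range (algebraMap D K)) →
        (Polynomial.aeval C (g * h)).BlockTriangular id ∧
          ∀ a b, (Polynomial.aeval C (g * h)) a b ∈ Set.range (algebraMap D K) :=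
  stmt12_general D K i j g h hg hh
end

section
/- Let R be a commutative ring. The set of right null-polynomials N = {f ∈ (T_n(R))[x] : f(C) = 0 for all C ∈ T_n(R)}, where f(C) = Σ_k F_k C^k, is a two-sided ideal of the (noncommutative) polynomial ring (T_n(R))[x]. -/
/-- Membership in `(Tₙ(R))[x]`: all coefficients are upper triangular. -/
def IsTriPoly (n : ℕ) (R : Type*) [CommRing R]
    (f : Polynomial (Matrix (Fin n) (Fin n) R)) : Prop :=
  ∀ k, (f.coeff k).BlockTriangular id

/-- `f` is a right null-polynomial on `Tₙ(R)`: `f ∈ (Tₙ(R))[x]` and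
`f(C) = Σ_k F_k C^k = 0` for every `C ∈ Tₙ(R)`. -/
def IsRightNull (n : ℕ) (R : Type*) [CommRing R]
    (f : Polynomial (Matrix (Fin n) (Fin n) R)) : Prop :=
  IsTriPoly n R f ∧
    ∀ C : Matrix (Fin n) (Fin n) R, C.BlockTriangular id → f.eval C = 0

/-!
Write `f·d` for the product of `f` with the constant polynomial `d`. Since
`(f g)(C) = (f·g(C))(C)`, the null polynomials form a left ideal, and they form a right ideal
once `f·d` is null for every null `f` and every `d ∈ Tₙ(R)`. For a fixed null `f` these `d` form
an `R`-submodule. It contains the units `u` of `Tₙ(R)`, because `f(u C u⁻¹) = (f·u)(C) u⁻¹`,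
hence `e_ij = (1 + e_ij) - 1` for `i < j`. It contains each diagonal projection `q` onto a final
segment of coordinates: `q C q = q C` for triangular `C` gives `(q C)^(k+1) = q C^(k+1)`, so
`(f·q)(C) = f(q C) - f(0) (1 - q)`. The `e_ii` are differences of two such projections, and the
`e_ij` with `i ≤ j` span `Tₙ(R)`.
-/

open Polynomial Matrix

section NullMultipliers

variable {A : Type*} [Ring A]

namespace Polynomial

theorem eval_monomial_mul (k : ℕ) (c : A) (g : A[X]) (a : A) :
    (monomial k c * g).eval a = c * g.eval a * a ^ k := by
  rw [← C_mul_X_pow_eq_monomial, mul_assoc, X_pow_mul, eval_C_mul, eval_mul_X_pow, mul_assoc]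

theorem eval_mul_eq_eval_mul_C_eval (f g : A[X]) (a : A) :
    (f * g).eval a = (f * C (g.eval a)).eval a := by
  induction f using Polynomial.induction_on' with
  | add p q hp hq => simp only [add_mul, eval_add, hp, hq]
  | monomial k c => simp only [eval_monomial_mul, eval_C]

theorem eval_conj_eq_eval_mul_C (f : A[X]) (u : Aˣ) (s : A) :
    f.eval (u * s * ↑u⁻¹) = (f * C (u : A)).eval s * ↑u⁻¹ := by
  induction f using Polynomial.induction_on' with
  | add p q hp hq => simp only [add_mul, eval_add, hp, hq]
  | monomial k c =>
    rw [eval_monomial_mul, eval_monomial, eval_C, Units.conj_pow]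
    simp only [mul_assoc]

theorem eval_mul_C_of_mul_mul_eq {q s : A} (hqs : q * s * q = q * s) (f : A[X]) :
    (f * C q).eval s = f.eval (q * s) - f.eval 0 * (1 - q) := by
  have hpow : ∀ k, (q * s) ^ (k + 1) = q * s ^ (k + 1) := by
    intro k
    induction k with
    | zero => simp
    | succ k ih => rw [pow_succ', ih, ← mul_assoc, hqs, mul_assoc, ← pow_succ']
  induction f using Polynomial.induction_on' with
  | add p r hp hr => simp only [add_mul, eval_add, hp, hr]; abel
  | monomial k c =>
    cases k with
    | zero => simp only [eval_monomial_mul, eval_monomial, eval_C]; noncomm_ring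
    | succ k => simp [eval_monomial, hpow, mul_assoc]

end Polynomial

variable (R : Type*) [CommRing R] [Algebra R A]

def rightNullMultipliers (S : Set A) (f : A[X]) : Submodule R A where
  carrier := {d | ∀ s ∈ S, (f * C d).eval s = 0}
  zero_mem' s _ := by simp
  add_mem' hd he s hs := by simp only [C_add, mul_add, eval_add, hd s hs, he s hs, add_zero]
  smul_mem' c d hd s hs := by
    simp only [← smul_C, mul_smul_comm, eval_smul, hd s hs, smul_zero]

variable {R} {S : Set A} {f : A[X]}

theorem one_mem_rightNullMultipliers (hf : ∀ s ∈ S, f.eval s = 0) :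
    1 ∈ rightNullMultipliers R S f := by
  simpa [rightNullMultipliers] using hf

theorem unit_mem_rightNullMultipliers (hf : ∀ s ∈ S, f.eval s = 0) (u : Aˣ)
    (hu : ∀ s ∈ S, u * s * ↑u⁻¹ ∈ S) : (u : A) ∈ rightNullMultipliers R S f := fun s hs => by
  rw [← Units.inv_mul_cancel_right ((f * C (u : A)).eval s) u, ← eval_conj_eq_eval_mul_C,
    hf _ (hu s hs), zero_mul]

theorem mem_rightNullMultipliers_of_mul_mul_eq (hf : ∀ s ∈ S, f.eval s = 0) (hS : 0 ∈ S) {q : A}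
    (hq : ∀ s ∈ S, q * s * q = q * s) (hqS : ∀ s ∈ S, q * s ∈ S) :
    q ∈ rightNullMultipliers R S f := fun s hs => by
  rw [eval_mul_C_of_mul_mul_eq (hq s hs), hf _ (hqS s hs), hf 0 hS, zero_mul, sub_zero]

end NullMultipliers

namespace Matrix

variable {m R : Type*} [DecidableEq m] [LinearOrder m] [CommRing R]

def upperSetProjection (p : m → Prop) [DecidablePred p] : Matrix m m R :=
  diagonal fun k => if p k then 1 else 0

theorem single_one_self_eq_sub_upperSetProjection (i : m) :
    single i i (1 : R) = upperSetProjection (i ≤ ·) - upperSetProjection (i < ·) := by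
  ext a b
  simp only [upperSetProjection, single_apply, sub_apply, diagonal_apply]
  split_ifs <;> grind

variable [Fintype m]

theorem BlockTriangular.upperSetProjection_mul_mul_self {C : Matrix m m R}
    (hC : C.BlockTriangular id) {p : m → Prop} [DecidablePred p] (hp : Monotone p) :
    upperSetProjection p * C * upperSetProjection p = upperSetProjection p * C := by
  ext a b
  by_cases hb : p b
  · simp [upperSetProjection, hb]
  · by_cases ha : p a
    · simp [upperSetProjection, ha, hb, hC (lt_of_not_ge fun hab => hb (hp hab ha))]
    · simp [upperSetProjection, ha, hb]

theorem mem_rightNullMultipliers_of_blockTriangular {f : (Matrix m m R)[X]}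
    (hf : ∀ C : Matrix m m R, C.BlockTriangular id → f.eval C = 0) {D : Matrix m m R}
    (hD : D.BlockTriangular id) : D ∈ rightNullMultipliers R {C | C.BlockTriangular id} f := by
  set N := rightNullMultipliers R {C : Matrix m m R | C.BlockTriangular id} f
  have hprojection (p : m → Prop) [DecidablePred p] (hp : Monotone p) :
      upperSetProjection p ∈ N :=
    mem_rightNullMultipliers_of_mul_mul_eq hf blockTriangular_zero
      (fun _ hC => BlockTriangular.upperSetProjection_mul_mul_self hC hp)
      (fun _ hC => (blockTriangular_diagonal _).mul hC)
  have htransvection {i j : m} (hij : i < j) : transvection i j (1 : R) ∈ N := by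
    let u : (Matrix m m R)ˣ :=
      ⟨transvection i j 1, transvection i j (-1), by
        rw [transvection_mul_transvection_same _ _ hij.ne, add_neg_cancel, transvection_zero], by
        rw [transvection_mul_transvection_same _ _ hij.ne, neg_add_cancel, transvection_zero]⟩
    exact unit_mem_rightNullMultipliers hf u fun _ hC =>
      ((blockTriangular_transvection hij.le _).mul hC).mul (blockTriangular_transvection hij.le _)
  have hsingle {i j : m} (hij : i ≤ j) : single i j (1 : R) ∈ N := by
    rcases hij.lt_or_eq with hij | rfl
    · rw [show single i j (1 : R) = transvection i j 1 - 1 by simp [transvection]]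
      exact N.sub_mem (htransvection hij) (one_mem_rightNullMultipliers hf)
    · rw [single_one_self_eq_sub_upperSetProjection]
      exact N.sub_mem (hprojection _ fun _ _ hab hia => hia.trans hab)
        (hprojection _ fun _ _ hab hia => hia.trans_le hab)
  rw [matrix_eq_sum_single D]
  refine N.sum_mem fun i _ => N.sum_mem fun j _ => ?_
  rcases le_or_gt i j with hij | hji
  · simpa [smul_single] using N.smul_mem (D i j) (hsingle hij)
  · simp [hD hji, N.zero_mem]

end Matrix

theorem IsTriPoly.mul {n : ℕ} {R : Type*} [CommRing R] {f g : (Matrix (Fin n) (Fin n) R)[X]}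
    (hf : IsTriPoly n R f) (hg : IsTriPoly n R g) : IsTriPoly n R (f * g) := fun k => by
  rw [coeff_mul]
  exact sum_mem (S := blockTriangularSubsemiring R id) fun x _ => (hf x.1).mul (hg x.2)

theorem IsTriPoly.blockTriangular_eval {n : ℕ} {R : Type*} [CommRing R]
    {f : (Matrix (Fin n) (Fin n) R)[X]} (hf : IsTriPoly n R f) {C : Matrix (Fin n) (Fin n) R}
    (hC : C.BlockTriangular id) : (f.eval C).BlockTriangular id := by
  rw [eval_eq_sum_range]
  exact sum_mem (S := blockTriangularSubsemiring R id) fun i _ => (hf i).mul (hC.pow i)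

/-- The set of right null-polynomials on `Tₙ(R)` is a two-sided ideal of `(Tₙ(R))[x]`:
it contains `0`, is closed under addition and negation, and absorbs multiplication
on both sides by elements of `(Tₙ(R))[x]`. -/
theorem stmt15 (n : ℕ) (R : Type*) [CommRing R] :
    IsRightNull n R 0 ∧
    (∀ f g, IsRightNull n R f → IsRightNull n R g → IsRightNull n R (f + g)) ∧
    (∀ f, IsRightNull n R f → IsRightNull n R (-f)) ∧
    (∀ f g, IsRightNull n R f → IsTriPoly n R g →
      IsRightNull n R (f * g) ∧ IsRightNull n R (g * f)) := by
  refine ⟨⟨fun _ => by simp [blockTriangular_zero], fun _ _ => eval_zero⟩, ?_, ?_, ?_⟩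
  · rintro f g ⟨hf, hf0⟩ ⟨hg, hg0⟩
    exact ⟨fun k => by simpa using (hf k).add (hg k), fun C hC => by simp [hf0 C hC, hg0 C hC]⟩
  · rintro f ⟨hf, hf0⟩
    exact ⟨fun k => by simpa using (hf k).neg, fun C hC => by simp [hf0 C hC]⟩
  · rintro f g ⟨hf, hf0⟩ hg
    refine ⟨⟨hf.mul hg, fun C hC => ?_⟩, ⟨hg.mul hf, fun C hC => ?_⟩⟩
    · rw [eval_mul_eq_eval_mul_C_eval]
      exact mem_rightNullMultipliers_of_blockTriangular hf0 (hg.blockTriangular_eval hC) C hC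
    · rw [eval_mul_eq_eval_mul_C_eval, hf0 C hC, C_0, mul_zero, eval_zero]
end

section
/- Let D be a domain with quotient field K. The set of right integer-valued polynomials Int = {f ∈ (T_n(K))[x] : f(C) ∈ T_n(D) for all C ∈ T_n(D)}, where f(C) = Σ_k F_k C^k, is a subring of (T_n(K))[x]; in particular it is closed under multiplication. -/
open Polynomial Matrix

namespace Stmt17Aux

variable {n : ℕ} {K : Type*} [Field K]

/-- `T p B A = Σᵢ pᵢ * B * A^i`. -/
noncomputable def T (p : Polynomial (Matrix (Fin n) (Fin n) K))
    (B A : Matrix (Fin n) (Fin n) K) : Matrix (Fin n) (Fin n) K :=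
  (p * Polynomial.C B).eval A

lemma T_monomial (i : ℕ) (a B A : Matrix (Fin n) (Fin n) K) :
    T (monomial i a) B A = a * B * A ^ i := by
  unfold T
  rw [← Polynomial.monomial_zero_left, monomial_mul_monomial, eval_monomial]
  simp

lemma T_add_left (p q : Polynomial (Matrix (Fin n) (Fin n) K)) (B A) :
    T (p + q) B A = T p B A + T q B A := by
  unfold T; rw [add_mul, eval_add]

lemma T_add_right (p : Polynomial (Matrix (Fin n) (Fin n) K)) (B₁ B₂ A) :
    T p (B₁ + B₂) A = T p B₁ A + T p B₂ A := by
  unfold T; rw [map_add, mul_add, eval_add]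

lemma T_zero_left (B A : Matrix (Fin n) (Fin n) K) : T 0 B A = 0 := by
  unfold T; rw [zero_mul, eval_zero]

lemma T_zero_right (p : Polynomial (Matrix (Fin n) (Fin n) K)) (A) :
    T p 0 A = 0 := by
  unfold T; rw [map_zero, mul_zero, eval_zero]

lemma T_sub_right (p : Polynomial (Matrix (Fin n) (Fin n) K)) (B₁ B₂ A) :
    T p (B₁ - B₂) A = T p B₁ A - T p B₂ A := by
  unfold T; rw [map_sub, mul_sub, eval_sub]

lemma key1 (f g : Polynomial (Matrix (Fin n) (Fin n) K)) (A) :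
    (f * g).eval A = T f (g.eval A) A := by
  induction f using Polynomial.induction_on' with
  | add p q hp hq => rw [add_mul, eval_add, hp, hq, T_add_left]
  | monomial i a =>
    rw [T_monomial]
    induction g using Polynomial.induction_on' with
    | add p q hp hq =>
      rw [mul_add, eval_add, hp, hq, eval_add, mul_add, add_mul]
    | monomial j b =>
      rw [monomial_mul_monomial, eval_monomial, eval_monomial, add_comm i j,
        pow_add]
      simp [mul_assoc]

lemma divX_monomial' (i : ℕ) (a : Matrix (Fin n) (Fin n) K) :
    (monomial (i + 1) a).divX = monomial i a := by
  ext k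
  rw [coeff_divX, coeff_monomial, coeff_monomial]
  simp

lemma L2 (f : Polynomial (Matrix (Fin n) (Fin n) K)) (B A) :
    T f B A = f.coeff 0 * B + T f.divX (B * A) A := by
  induction f using Polynomial.induction_on' with
  | add p q hp hq =>
    rw [T_add_left, hp, hq, divX_add, T_add_left, coeff_add, add_mul]
    abel
  | monomial i a =>
    cases i with
    | zero =>
      rw [T_monomial, Polynomial.monomial_zero_left, divX_C, T_zero_left,
        coeff_C_zero]
      simp
    | succ k =>
      rw [T_monomial, divX_monomial', T_monomial, coeff_monomial]
      simp [pow_succ', mul_assoc]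

lemma nilp_pow (A Z : Matrix (Fin n) (Fin n) K) (h1 : A * Z = 0)
    (h2 : Z * Z = 0) : ∀ k, (A + Z) ^ (k + 1) = A ^ (k + 1) + Z * A ^ k := by
  have hAZ : ∀ m, A ^ (m + 1) * Z = 0 := by
    intro m; rw [pow_succ, mul_assoc, h1, mul_zero]
  have hZAZ : ∀ m, Z * A ^ m * Z = 0 := by
    intro m
    cases m with
    | zero => simpa using h2
    | succ j => rw [mul_assoc, hAZ j, mul_zero]
  intro k
  induction k with
  | zero => simp
  | succ m ih =>
    rw [pow_succ, ih, add_mul, mul_add, mul_add, hAZ m, hZAZ m, add_zero,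
      add_zero, mul_assoc, ← pow_succ, ← pow_succ]

lemma L3 (f : Polynomial (Matrix (Fin n) (Fin n) K)) (A Z) (h1 : A * Z = 0)
    (h2 : Z * Z = 0) : f.eval (A + Z) = f.eval A + T f.divX Z A := by
  induction f using Polynomial.induction_on' with
  | add p q hp hq =>
    rw [eval_add, hp, hq, eval_add, divX_add, T_add_left]
    abel
  | monomial i a =>
    cases i with
    | zero =>
      rw [Polynomial.monomial_zero_left, eval_C, eval_C, divX_C, T_zero_left,
        add_zero]
    | succ k =>
      rw [eval_monomial, eval_monomial, divX_monomial', T_monomial,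
        nilp_pow A Z h1 h2 k, mul_add, mul_assoc]

lemma T_congr (p : Polynomial (Matrix (Fin n) (Fin n) K)) (Z A A')
    (h : ∀ i, Z * A ^ i = Z * A' ^ i) : T p Z A = T p Z A' := by
  induction p using Polynomial.induction_on' with
  | add p q hp hq => rw [T_add_left, T_add_left, hp, hq]
  | monomial i a => rw [T_monomial, T_monomial, mul_assoc, mul_assoc, h i]

lemma L5 (p : Polynomial (Matrix (Fin n) (Fin n) K)) (x) :
    p.divX.eval x * x + p.coeff 0 = p.eval x := by
  conv_rhs => rw [← divX_mul_X_add p]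
  rw [eval_add, eval_mul_X, eval_C]

lemma T_self (p : Polynomial (Matrix (Fin n) (Fin n) K)) (d : K) (Z) :
    T p (d • Z) Z = d • (p.eval Z * Z) := by
  induction p using Polynomial.induction_on' with
  | add p q hp hq => rw [T_add_left, hp, hq, eval_add, add_mul, smul_add]
  | monomial i a =>
    rw [T_monomial, eval_monomial, mul_smul_comm, smul_mul_assoc]
    congr 1
    rw [mul_assoc, ← pow_succ', pow_succ, ← mul_assoc]

/-- the truncation idempotent: identity on indices `≥ j`. -/
def ee (j : ℕ) : Matrix (Fin n) (Fin n) K :=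
  diagonal fun u => if j ≤ (u : ℕ) then 1 else 0

lemma lemA {M : Matrix (Fin n) (Fin n) K} (hM : M.BlockTriangular id) (j : ℕ) :
    ee j * M * ee j = ee j * M := by
  ext u v
  rw [ee, mul_diagonal, diagonal_mul]
  by_cases hv : j ≤ (v : ℕ)
  · rw [if_pos hv, mul_one]
  · rw [if_neg hv, mul_zero]
    by_cases hu : j ≤ (u : ℕ)
    · rw [if_pos hu, one_mul]
      have : (v : ℕ) < (u : ℕ) := lt_of_lt_of_le (not_le.mp hv) hu
      exact (hM (show (id v : Fin n) < id u from Fin.lt_def.mpr this)).symm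
    · rw [if_neg hu, zero_mul]

lemma bt_pow {A : Matrix (Fin n) (Fin n) K} (hA : A.BlockTriangular id) :
    ∀ m, (A ^ m).BlockTriangular id := by
  intro m
  induction m with
  | zero => simpa using Matrix.blockTriangular_one
  | succ k ih => rw [pow_succ]; exact ih.mul hA

lemma lemB {A : Matrix (Fin n) (Fin n) K} (hA : A.BlockTriangular id) (j : ℕ) :
    ∀ m, ee j * A ^ (m + 1) = (ee j * A) ^ (m + 1) := by
  intro m
  induction m with
  | zero => simp
  | succ k ih =>
    have h1 : (ee j * A) ^ (k + 1) * ee (n := n) j = (ee j * A) ^ (k + 1) := by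
      rw [← ih, lemA (bt_pow hA (k + 1)) j]
    calc ee j * A ^ (k + 1 + 1) = (ee j * A ^ (k + 1)) * A := by
          rw [pow_succ, mul_assoc]
      _ = (ee j * A) ^ (k + 1) * A := by rw [ih]
      _ = ((ee j * A) ^ (k + 1) * ee j) * A := by rw [h1]
      _ = (ee j * A) ^ (k + 1) * (ee j * A) := by rw [mul_assoc]
      _ = (ee j * A) ^ (k + 1 + 1) := by rw [← pow_succ]



lemma stdBasis_apply (s t u v : Fin n) (d : K) :
    single s t d u v = if s = u ∧ t = v then d else 0 := by
  rw [Matrix.single]; rfl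

section GoodSec

variable (D : Type*) [CommRing D] [Algebra D K]

/-- triangular with entries in the image of `D`. -/
def Good (M : Matrix (Fin n) (Fin n) K) : Prop :=
  M.BlockTriangular id ∧ ∀ a b, M a b ∈ Set.range (algebraMap D K)

variable {D}

lemma memR_zero : (0 : K) ∈ Set.range (algebraMap D K) := ⟨0, map_zero _⟩

lemma memR_one : (1 : K) ∈ Set.range (algebraMap D K) := ⟨1, map_one _⟩

lemma memR_add {x y : K} (hx : x ∈ Set.range (algebraMap D K))
    (hy : y ∈ Set.range (algebraMap D K)) :
    x + y ∈ Set.range (algebraMap D K) := by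
  obtain ⟨a, rfl⟩ := hx; obtain ⟨b, rfl⟩ := hy
  exact ⟨a + b, map_add _ _ _⟩

lemma memR_neg {x : K} (hx : x ∈ Set.range (algebraMap D K)) :
    -x ∈ Set.range (algebraMap D K) := by
  obtain ⟨a, rfl⟩ := hx; exact ⟨-a, map_neg _ _⟩

lemma memR_mul {x y : K} (hx : x ∈ Set.range (algebraMap D K))
    (hy : y ∈ Set.range (algebraMap D K)) :
    x * y ∈ Set.range (algebraMap D K) := by
  obtain ⟨a, rfl⟩ := hx; obtain ⟨b, rfl⟩ := hy
  exact ⟨a * b, map_mul _ _ _⟩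

lemma memR_sum {ι : Type*} (s : Finset ι) (g : ι → K)
    (h : ∀ i ∈ s, g i ∈ Set.range (algebraMap D K)) :
    (∑ i ∈ s, g i) ∈ Set.range (algebraMap D K) :=
  Finset.sum_induction g _ (fun _ _ => memR_add) memR_zero h

lemma Good_zero : Good D (0 : Matrix (Fin n) (Fin n) K) :=
  ⟨blockTriangular_zero, fun _ _ => memR_zero⟩

lemma Good_one : Good D (1 : Matrix (Fin n) (Fin n) K) := by
  refine ⟨blockTriangular_one, fun a b => ?_⟩
  rw [Matrix.one_apply]
  split
  · exact memR_one
  · exact memR_zero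

lemma Good_add {M N : Matrix (Fin n) (Fin n) K} (hM : Good D M)
    (hN : Good D N) : Good D (M + N) :=
  ⟨hM.1.add hN.1, fun a b => memR_add (hM.2 a b) (hN.2 a b)⟩

lemma Good_neg {M : Matrix (Fin n) (Fin n) K} (hM : Good D M) :
    Good D (-M) :=
  ⟨hM.1.neg, fun a b => memR_neg (hM.2 a b)⟩

lemma Good_sub {M N : Matrix (Fin n) (Fin n) K} (hM : Good D M)
    (hN : Good D N) : Good D (M - N) := by
  rw [sub_eq_add_neg]; exact Good_add hM (Good_neg hN)

lemma Good_mul {M N : Matrix (Fin n) (Fin n) K} (hM : Good D M)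
    (hN : Good D N) : Good D (M * N) := by
  refine ⟨hM.1.mul hN.1, fun a b => ?_⟩
  rw [Matrix.mul_apply]
  exact memR_sum _ _ fun w _ => memR_mul (hM.2 a w) (hN.2 w b)

lemma Good_smul {d : K} (hd : d ∈ Set.range (algebraMap D K))
    {M : Matrix (Fin n) (Fin n) K} (hM : Good D M) : Good D (d • M) := by
  constructor
  · intro i j hij
    rw [Matrix.smul_apply, hM.1 hij, smul_zero]
  · intro a b
    rw [Matrix.smul_apply, smul_eq_mul]
    exact memR_mul hd (hM.2 a b)

lemma Good_sum {ι : Type*} (s : Finset ι) (g : ι → Matrix (Fin n) (Fin n) K)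
    (h : ∀ i ∈ s, Good D (g i)) : Good D (∑ i ∈ s, g i) :=
  Finset.sum_induction g _ (fun _ _ => Good_add) Good_zero h

lemma Good_ee (j : ℕ) : Good D (ee j : Matrix (Fin n) (Fin n) K) := by
  refine ⟨blockTriangular_diagonal _, fun a b => ?_⟩
  rw [ee, Matrix.diagonal_apply]
  split
  · split
    · exact memR_one
    · exact memR_zero
  · exact memR_zero

lemma Good_std {s t : Fin n} (hst : s ≤ t) {d : K}
    (hd : d ∈ Set.range (algebraMap D K)) : Good D (single s t d) := by
  constructor
  · intro i j hij
    rw [stdBasis_apply]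
    rw [if_neg]
    rintro ⟨rfl, rfl⟩
    exact absurd hst (not_le.mpr hij)
  · intro a b
    rw [stdBasis_apply]
    split
    · exact hd
    · exact memR_zero

end GoodSec

section Main

variable {D : Type*} [CommRing D] [Algebra D K]

lemma E_mul_ee (s t : Fin n) (d : K) :
    single s t d * ee (t : ℕ) = single s t d := by
  ext u v
  rw [ee, mul_diagonal, stdBasis_apply]
  by_cases h : (t : ℕ) ≤ (v : ℕ)
  · rw [if_pos h, mul_one]
  · rw [if_neg h, mul_zero,
      if_neg (fun hc => h (congrArg Fin.val hc.2).le)]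

lemma AE_fact {A : Matrix (Fin n) (Fin n) K} (hA : A.BlockTriangular id)
    {s t : Fin n} (hst : s < t) (d : K) :
    ee (t : ℕ) * (A * single s t d) = 0 := by
  ext u v
  rw [ee, diagonal_mul, Matrix.zero_apply]
  by_cases hv : v = t
  · rw [hv, mul_single_apply_same]
    by_cases hu : (t : ℕ) ≤ (u : ℕ)
    · rw [if_pos hu, one_mul]
      have hsu : (id s : Fin n) < id u :=
        lt_of_lt_of_le hst (Fin.le_def.mpr hu)
      rw [hA hsu, zero_mul]
    · rw [if_neg hu, zero_mul]
  · rw [mul_single_apply_of_ne d s t u v hv, mul_zero]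

lemma EAE_fact {A : Matrix (Fin n) (Fin n) K} (hA : A.BlockTriangular id)
    {s t : Fin n} (hst : s < t) (d : K) :
    single s t d * A * single s t d = 0 := by
  ext u v
  rw [Matrix.zero_apply]
  by_cases hv : v = t
  · rw [hv, mul_single_apply_same]
    by_cases hu : u = s
    · rw [hu, single_mul_apply_same]
      have hts : A t s = 0 := hA (show (id s : Fin n) < id t from hst)
      rw [hts, mul_zero, zero_mul]
    · rw [single_mul_apply_of_ne d s t u s hu, zero_mul]
  · rw [mul_single_apply_of_ne d s t u v hv]

lemma E_pow {A : Matrix (Fin n) (Fin n) K} (hA : A.BlockTriangular id)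
    (s t : Fin n) (d : K) :
    ∀ m, single s t d * A ^ m
      = single s t d * (ee (t : ℕ) * A) ^ m := by
  intro m
  cases m with
  | zero => rfl
  | succ k =>
    rw [← lemB hA (t : ℕ) k, ← mul_assoc, E_mul_ee]

lemma case_lt (f : Polynomial (Matrix (Fin n) (Fin n) K))
    (hf : ∀ A, Good D A → Good D (f.eval A)) {s t : Fin n} (hst : s < t)
    {d : K} (hd : d ∈ Set.range (algebraMap D K))
    {A : Matrix (Fin n) (Fin n) K} (hA : Good D A) :
    Good D (T f (single s t d) A) := by
  set E := single s t d with hE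
  set A' := ee (t : ℕ) * A with hA'def
  set Z := E * A with hZdef
  have hEA' : E * A' = E * A := by
    rw [hA'def, ← mul_assoc, hE, E_mul_ee]
  have hZcongr : ∀ i, Z * A ^ i = Z * A' ^ i := by
    intro i
    calc Z * A ^ i = E * A ^ (i + 1) := by
          rw [hZdef, mul_assoc, ← pow_succ']
      _ = E * A' ^ (i + 1) := E_pow hA.1 s t d (i + 1)
      _ = (E * A') * A' ^ i := by rw [pow_succ', ← mul_assoc]
      _ = Z * A' ^ i := by rw [hEA', ← hZdef]
  have hA'Z : A' * Z = 0 := by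
    calc A' * Z = (ee (t : ℕ) * (A * E)) * A := by
          rw [hA'def, hZdef, mul_assoc, mul_assoc, mul_assoc]
      _ = 0 := by rw [AE_fact hA.1 hst d, zero_mul]
  have hZZ : Z * Z = 0 := by
    calc Z * Z = (E * A * E) * A := by
          rw [hZdef, ← mul_assoc]
      _ = 0 := by rw [EAE_fact hA.1 hst d, zero_mul]
  have hTZ : T f.divX Z A' = f.eval (A' + Z) - f.eval A' := by
    rw [L3 f A' Z hA'Z hZZ]; abel
  have key : T f E A = f.coeff 0 * E + (f.eval (A' + Z) - f.eval A') := by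
    rw [L2, T_congr f.divX (E * A) A A' hZcongr, ← hZdef, hTZ]
  rw [key]
  have hF0 : Good D (f.coeff 0) := by
    rw [coeff_zero_eq_eval_zero]; exact hf 0 Good_zero
  have hGE : Good D E := Good_std hst.le hd
  have hGA' : Good D A' := Good_mul (Good_ee _) hA
  have hGZ : Good D Z := Good_mul hGE hA
  exact Good_add (Good_mul hF0 hGE)
    (Good_sub (hf _ (Good_add hGA' hGZ)) (hf _ hGA'))

/-- scaled truncation. -/
def dee (d : K) (j : ℕ) : Matrix (Fin n) (Fin n) K :=
  diagonal fun u => if j ≤ (u : ℕ) then d else 0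

lemma dee_eq (d : K) (j : ℕ) : (dee d j : Matrix (Fin n) (Fin n) K) = d • ee j := by
  ext u v
  rw [dee, ee, Matrix.smul_apply, diagonal_apply, diagonal_apply, smul_eq_mul]
  by_cases h : u = v
  · rw [if_pos h, if_pos h]
    split
    · rw [mul_one]
    · rw [mul_zero]
  · rw [if_neg h, if_neg h, mul_zero]

lemma Good_dee {d : K} (hd : d ∈ Set.range (algebraMap D K)) (j : ℕ) :
    Good D (dee d j : Matrix (Fin n) (Fin n) K) := by
  rw [dee_eq]; exact Good_smul hd (Good_ee j)

lemma std_split (s : Fin n) (d : K) :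
    single s s d
      = (dee d (s : ℕ) : Matrix (Fin n) (Fin n) K) - dee d ((s : ℕ) + 1) := by
  ext u v
  rw [stdBasis_apply, Matrix.sub_apply, dee, dee, diagonal_apply, diagonal_apply]
  by_cases h : u = v
  · subst h
    rw [if_pos rfl, if_pos rfl]
    by_cases hs : s = u
    · subst hs
      rw [if_pos ⟨rfl, rfl⟩, if_pos le_rfl, if_neg (by omega)]
      rw [sub_zero]
    · have hval : (s : ℕ) ≠ (u : ℕ) := fun h => hs (Fin.ext h)
      rw [if_neg (fun ⟨h1, _⟩ => hs h1)]
      rcases lt_or_gt_of_ne hval with h1 | h1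
      · rw [if_pos h1.le, if_pos (by omega), sub_self]
      · rw [if_neg (by omega), if_neg (by omega), sub_zero]
  · rw [if_neg h, if_neg (fun ⟨h1, h2⟩ => h (h1 ▸ h2 ▸ rfl)), if_neg h, sub_zero]

lemma case_dee (f : Polynomial (Matrix (Fin n) (Fin n) K))
    (hf : ∀ A, Good D A → Good D (f.eval A)) {d : K}
    (hd : d ∈ Set.range (algebraMap D K)) (j : ℕ)
    {A : Matrix (Fin n) (Fin n) K} (hA : Good D A) :
    Good D (T f (dee d j) A) := by
  set Z' := (ee j : Matrix (Fin n) (Fin n) K) * A with hZ'def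
  have h1 : (dee d j : Matrix (Fin n) (Fin n) K) * A = d • Z' := by
    rw [dee_eq, smul_mul_assoc]
  have hcong : ∀ i, (d • Z') * A ^ i = (d • Z') * Z' ^ i := by
    intro i
    rw [smul_mul_assoc, smul_mul_assoc]
    congr 1
    calc Z' * A ^ i = ee j * A ^ (i + 1) := by
          rw [hZ'def, mul_assoc, ← pow_succ']
      _ = Z' ^ (i + 1) := by rw [lemB hA.1 j i, ← hZ'def]
      _ = Z' * Z' ^ i := by rw [pow_succ']
  have hL5 : f.divX.eval Z' * Z' = f.eval Z' - f.coeff 0 :=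
    eq_sub_of_add_eq (L5 f Z')
  have key : T f (dee d j) A
      = f.coeff 0 * dee d j + d • (f.eval Z' - f.coeff 0) := by
    rw [L2, h1, T_congr f.divX (d • Z') A Z' hcong, T_self, hL5]
  rw [key]
  have hF0 : Good D (f.coeff 0) := by
    rw [coeff_zero_eq_eval_zero]; exact hf 0 Good_zero
  have hGZ' : Good D Z' := Good_mul (Good_ee j) hA
  exact Good_add (Good_mul hF0 (Good_dee hd j))
    (Good_smul hd (Good_sub (hf _ hGZ') hF0))

lemma T_sum_right {ι : Type*} (s : Finset ι)
    (g : ι → Matrix (Fin n) (Fin n) K) (p : Polynomial (Matrix (Fin n) (Fin n) K))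
    (A : Matrix (Fin n) (Fin n) K) :
    T p (∑ i ∈ s, g i) A = ∑ i ∈ s, T p (g i) A := by
  classical
  induction s using Finset.induction_on with
  | empty => simp [T_zero_right]
  | insert _ _ h ih =>
    rw [Finset.sum_insert h, Finset.sum_insert h, T_add_right, ih]

lemma mainT (f : Polynomial (Matrix (Fin n) (Fin n) K))
    (hf : ∀ A, Good D A → Good D (f.eval A))
    {B A : Matrix (Fin n) (Fin n) K} (hB : Good D B) (hA : Good D A) :
    Good D (T f B A) := by
  have hrep : T f B A
      = ∑ s : Fin n, ∑ t : Fin n, T f (single s t (B s t)) A := by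
    conv_lhs => rw [matrix_eq_sum_single B]
    rw [T_sum_right]
    exact Finset.sum_congr rfl fun s _ => by rw [T_sum_right]
  rw [hrep]
  refine Good_sum _ _ fun s _ => Good_sum _ _ fun t _ => ?_
  rcases lt_trichotomy s t with h | h | h
  · exact case_lt f hf h (hB.2 s t) hA
  · subst h
    rw [std_split, T_sub_right]
    exact Good_sub (case_dee f hf (hB.2 s s) _ hA) (case_dee f hf (hB.2 s s) _ hA)
  · have hz : B s t = 0 := hB.1 h
    rw [hz, single_zero, T_zero_right]
    exact Good_zero

end Main

end Stmt17Aux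

/-- `f` is a right integer-valued polynomial on `Tₙ(D)`: `f ∈ (Tₙ(K))[x]` (all
coefficients upper triangular) and `f(C) = Σ_k F_k C^k ∈ Tₙ(D)` for every
`C ∈ Tₙ(D)` (upper triangular with entries in the image of `D`). -/
def IsRightIntValued (n : ℕ) (D K : Type*) [CommRing D] [IsDomain D] [Field K]
    [Algebra D K] [IsFractionRing D K]
    (f : Polynomial (Matrix (Fin n) (Fin n) K)) : Prop :=
  (∀ k, (f.coeff k).BlockTriangular id) ∧
    ∀ C : Matrix (Fin n) (Fin n) K, C.BlockTriangular id →
      (∀ a b, C a b ∈ Set.range (algebraMap D K)) →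
      (f.eval C).BlockTriangular id ∧
        ∀ a b, f.eval C a b ∈ Set.range (algebraMap D K)

/-- The set of right integer-valued polynomials on `Tₙ(D)` with coefficients in
`Tₙ(K)` is a subring of `(Tₙ(K))[x]`: it contains `0` and `1`, and is closed under
addition, negation and multiplication. -/
theorem stmt17 (n : ℕ) (D K : Type*) [CommRing D] [IsDomain D] [Field K]
    [Algebra D K] [IsFractionRing D K] :
    IsRightIntValued n D K 0 ∧ IsRightIntValued n D K 1 ∧
    (∀ f g, IsRightIntValued n D K f → IsRightIntValued n D K g →
      IsRightIntValued n D K (f + g) ∧ IsRightIntValued n D K (f * g)) ∧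
    (∀ f, IsRightIntValued n D K f → IsRightIntValued n D K (-f)) := by
  classical
  open Stmt17Aux in
  refine ⟨⟨?_, ?_⟩, ⟨?_, ?_⟩, ?_, ?_⟩
  · intro k
    rw [Polynomial.coeff_zero]
    exact blockTriangular_zero
  · intro C hC hCe
    rw [Polynomial.eval_zero]
    exact ⟨blockTriangular_zero, fun _ _ => memR_zero⟩
  · intro k
    rw [Polynomial.coeff_one]
    split
    · exact blockTriangular_one
    · exact blockTriangular_zero
  · intro C hC hCe
    rw [Polynomial.eval_one]
    exact Good_one
  · intro f g hf hg
    constructor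
    · constructor
      · intro k
        rw [Polynomial.coeff_add]
        exact (hf.1 k).add (hg.1 k)
      · intro C hC hCe
        rw [Polynomial.eval_add]
        obtain ⟨h1t, h1e⟩ := hf.2 C hC hCe
        obtain ⟨h2t, h2e⟩ := hg.2 C hC hCe
        exact ⟨h1t.add h2t, fun a b => memR_add (h1e a b) (h2e a b)⟩
    · constructor
      · intro k
        rw [Polynomial.coeff_mul]
        refine Finset.sum_induction _ (fun M : Matrix (Fin n) (Fin n) K => M.BlockTriangular id)
          (fun _ _ ha hb => ha.add hb) blockTriangular_zero ?_
        intro x _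
        exact (hf.1 x.1).mul (hg.1 x.2)
      · intro C hC hCe
        have hGC : Good D C := ⟨hC, hCe⟩
        have hfG : ∀ A, Good D A → Good D (f.eval A) := fun A hA =>
          hf.2 A hA.1 hA.2
        have hgC : Good D (g.eval C) := hg.2 C hC hCe
        rw [key1]
        exact mainT f hfG hgC hGC
  · intro f hf
    constructor
    · intro k
      rw [Polynomial.coeff_neg]
      exact (hf.1 k).neg
    · intro C hC hCe
      rw [Polynomial.eval_neg]
      obtain ⟨h1t, h1e⟩ := hf.2 C hC hCe
      exact ⟨h1t.neg, fun a b => memR_neg (h1e a b)⟩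
end

section
/- Let D be a domain with quotient field K. The set of left integer-valued polynomials Int^ℓ = {f ∈ (T_n(K))[x] : f(C)_ℓ ∈ T_n(D) for all C ∈ T_n(D)}, where f(C)_ℓ = Σ_k C^k F_k, is a subring of (T_n(K))[x]. -/
/-!
Left substitution is additive but not multiplicative; instead, for `g = Σ_j G_j x^j`,
`(f * g)(C)_ℓ = Σ_j C^j A G_j` with `A = f(C)_ℓ ∈ Tₙ(D)`. Expanding `A` in matrix units
`E_cd` (`c ≤ d`), it suffices that `Σ_j C^j E_cd G_j ∈ Tₙ(D)`. There are 0/1 diagonal-plus-unit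
matrices `Y₀, Y₁ ∈ Tₙ(D)` with `Y₁ - Y₀ = E_cd` and `(C Yᵢ)^j = C^j Yᵢ` for `j ≥ 1` (they keep
the columns `≤ c` of `C`, and `Y₁` copies column `c` into column `d`), so
`Σ_j C^j E_cd G_j = g(C Y₁)_ℓ - g(C Y₀)_ℓ + E_cd g(0)_ℓ`, which lies in `Tₙ(D)` because `g` is
left integer-valued.
-/

/-- `f` is a left integer-valued polynomial on `Tₙ(D)`: `f ∈ (Tₙ(K))[x]` (all
coefficients upper triangular) and `f(C)_ℓ = Σ_k C^k F_k ∈ Tₙ(D)` for every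
`C ∈ Tₙ(D)` (upper triangular with entries in the image of `D`). -/
def IsLeftIntValued (n : ℕ) (D K : Type*) [CommRing D] [IsDomain D] [Field K]
    [Algebra D K] [IsFractionRing D K]
    (f : Polynomial (Matrix (Fin n) (Fin n) K)) : Prop :=
  (∀ k, (f.coeff k).BlockTriangular id) ∧
    ∀ C : Matrix (Fin n) (Fin n) K, C.BlockTriangular id →
      (∀ a b, C a b ∈ Set.range (algebraMap D K)) →
      (∑ k ∈ f.support, C ^ k * f.coeff k).BlockTriangular id ∧
        ∀ a b, (∑ k ∈ f.support, C ^ k * f.coeff k) a b ∈ Set.range (algebraMap D K)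

open Polynomial Matrix

namespace Polynomial

section Semiring

variable {A : Type*} [Semiring A]

noncomputable def leftEval (x : A) : A[X] →+ A where
  toFun f := f.sum fun k a => x ^ k * a
  map_zero' := sum_zero_index _
  map_add' f g := sum_add_index f g _ (fun _ => mul_zero _) fun _ _ _ => mul_add _ _ _

@[simp]
lemma leftEval_monomial (x : A) (k : ℕ) (a : A) : leftEval x (monomial k a) = x ^ k * a :=
  sum_monomial_index _ _ (mul_zero _)

@[simp]
lemma leftEval_one (x : A) : leftEval x 1 = 1 := by
  rw [← monomial_zero_one, leftEval_monomial, pow_zero, one_mul]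

lemma coeff_zero_eq_leftEval_zero (f : A[X]) : f.coeff 0 = leftEval 0 f := by
  induction f using Polynomial.induction_on' with
  | add p q hp hq => rw [coeff_add, map_add, hp, hq]
  | monomial k a => rw [leftEval_monomial, coeff_monomial]; cases k <;> simp

lemma leftEval_mul_monomial (x : A) (f : A[X]) (j : ℕ) (b : A) :
    leftEval x (f * monomial j b) = x ^ j * leftEval x f * b := by
  induction f using Polynomial.induction_on' with
  | add p q hp hq => rw [add_mul, map_add, hp, hq, map_add, mul_add, add_mul]
  | monomial i a =>
    rw [monomial_mul_monomial, leftEval_monomial, leftEval_monomial, pow_add, pow_mul_comm]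
    simp only [mul_assoc]

lemma leftEval_mul (x : A) (f g : A[X]) :
    leftEval x (f * g) = leftEval x (C (leftEval x f) * g) := by
  induction g using Polynomial.induction_on' with
  | add p q hp hq => rw [mul_add, mul_add, map_add, map_add, hp, hq]
  | monomial j b => rw [leftEval_mul_monomial, C_mul_monomial, leftEval_monomial, mul_assoc]

lemma leftEval_smul {R : Type*} [CommSemiring R] [Algebra R A] (x : A) (r : R) (f : A[X]) :
    leftEval x (r • f) = r • leftEval x f := by
  induction f using Polynomial.induction_on' with
  | add p q hp hq => rw [smul_add, map_add, map_add, hp, hq, smul_add]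
  | monomial k a => rw [smul_monomial, leftEval_monomial, leftEval_monomial, mul_smul_comm]

end Semiring

section Ring

variable {A : Type*} [Ring A]

lemma mul_mul_eq_mul_of_corner {x y p : A} (hyp : y * p = p) (hpy : p * y = y)
    (hx : p * x * p = x * p) : y * x * y = x * y :=
  calc y * x * y = y * x * (p * y) := by rw [hpy]
    _ = y * (p * x * p) * y := by rw [hx]; simp only [mul_assoc]
    _ = x * y := by rw [← mul_assoc y, ← mul_assoc y, hyp, hx, mul_assoc, hpy]

lemma mul_pow_succ_of_mul_mul_eq {x y : A} (h : y * x * y = x * y) (j : ℕ) :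
    (x * y) ^ (j + 1) = x ^ (j + 1) * y := by
  induction j with
  | zero => rw [zero_add, pow_one, pow_one]
  | succ j ih => rw [pow_succ, ih, mul_assoc, ← mul_assoc y, h, ← mul_assoc, ← pow_succ]

lemma leftEval_mul_eq_of_mul_mul_eq {x y : A} (h : y * x * y = x * y) (g : A[X]) :
    leftEval (x * y) g = leftEval x (C y * g) + (1 - y) * g.coeff 0 := by
  induction g using Polynomial.induction_on' with
  | add p q hp hq => rw [map_add, hp, hq, mul_add, map_add, coeff_add, mul_add]; abel
  | monomial k a =>
    rw [C_mul_monomial, leftEval_monomial, leftEval_monomial, coeff_monomial]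
    cases k with
    | zero => simp [sub_mul]
    | succ j => simp [mul_pow_succ_of_mul_mul_eq h, mul_assoc]

end Ring

end Polynomial

section

variable {ι R : Type*} [Fintype ι] [DecidableEq ι]

namespace Matrix

section Diagonal

variable [Ring R] {p : ι → Prop} [DecidablePred p]

variable (p) in
lemma diagonal_ite_mul_self :
    diagonal (fun i => if p i then (1 : R) else 0) * diagonal (fun i => if p i then 1 else 0) =
      diagonal (fun i => if p i then 1 else 0) := by
  rw [diagonal_mul_diagonal]; congr 1; ext i; split_ifs <;> simp

lemma diagonal_ite_mul_single {c : ι} (hc : p c) (d : ι) (a : R) :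
    diagonal (fun i => if p i then 1 else 0) * single c d a = single c d a := by
  ext i j
  by_cases hi : i = c
  · subst hi; simp [hc]
  · simp [Ne.symm hi]

lemma single_mul_diagonal_ite (c : ι) {d : ι} (hd : ¬p d) (a : R) :
    single c d a * diagonal (fun i => if p i then 1 else 0) = 0 := by
  ext i j
  by_cases hj : j = d
  · subst hj; simp [hd]
  · simp [Ne.symm hj]

variable [LinearOrder ι]

lemma diagonal_ite_mul_mul_of_antitone (hp : Antitone p) {C : Matrix ι ι R}
    (hC : C.BlockTriangular id) :
    diagonal (fun i => if p i then 1 else 0) * C * diagonal (fun i => if p i then 1 else 0) =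
      C * diagonal (fun i => if p i then 1 else 0) := by
  ext i j
  simp only [diagonal_mul, mul_diagonal]
  by_cases hj : p j
  · by_cases hi : p i
    · simp [hi, hj]
    · simp [hi, hj, hC (lt_of_not_ge fun hij => hi (hp hij hj))]
  · simp [hj]

omit [Fintype ι] in
lemma diagonal_ite_le_sub_diagonal_ite_lt (c : ι) :
    diagonal (fun i => if i ≤ c then (1 : R) else 0) - diagonal (fun i => if i < c then 1 else 0) =
      single c c 1 := by
  rw [diagonal_sub, ← diagonal_single]
  congr 1; ext i
  rcases lt_trichotomy i c with h | rfl | h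
  · simp [h, h.le, h.ne]
  · simp
  · simp [not_le.mpr h, not_lt.mpr h.le, h.ne']

end Diagonal

end Matrix

section UpperTriangular

variable [LinearOrder ι]

def Subring.upperTriangular [Ring R] (S : Subring R) : Subring (Matrix ι ι R) :=
  (blockTriangularSubalgebra ℤ R (id : ι → ι)).toSubring ⊓ S.matrix

namespace Subring

variable [Ring R] {S : Subring R}

lemma smul_mem_upperTriangular {r : R} (hr : r ∈ S) {M : Matrix ι ι R}
    (hM : M ∈ S.upperTriangular) : r • M ∈ S.upperTriangular :=
  ⟨fun i j hij => by rw [Matrix.smul_apply, hM.1 hij, smul_zero],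
    fun i j => S.mul_mem hr (hM.2 i j)⟩

lemma single_one_mem_upperTriangular {c d : ι} (hcd : c ≤ d) :
    single c d (1 : R) ∈ S.upperTriangular :=
  ⟨blockTriangular_single hcd 1, fun _ _ => by
    rw [single_apply]; split_ifs <;> simp [one_mem, zero_mem]⟩

lemma diagonal_ite_mem_upperTriangular (p : ι → Prop) [DecidablePred p] :
    diagonal (fun i => if p i then 1 else 0) ∈ S.upperTriangular :=
  ⟨blockTriangular_diagonal _, fun i j => by
    rw [diagonal_apply]; split_ifs <;> simp [one_mem, zero_mem]⟩

end Subring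

namespace Matrix

section Ring

variable [Ring R] {S : Subring R} {C : Matrix ι ι R} {c d : ι}

lemma exists_sub_eq_single_of_blockTriangular (hC : C.BlockTriangular id) (hcd : c ≤ d) :
    ∃ y₀ ∈ S.upperTriangular, ∃ y₁ ∈ S.upperTriangular,
      y₁ - y₀ = single c d 1 ∧ y₀ * C * y₀ = C * y₀ ∧ y₁ * C * y₁ = C * y₁ := by
  have hle := diagonal_ite_mul_mul_of_antitone (p := (· ≤ c)) (fun _ _ => le_trans) hC
  have hle_self := diagonal_ite_mul_self (R := R) (· ≤ c)
  rcases hcd.eq_or_lt with rfl | hcd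
  · have hlt := diagonal_ite_mul_mul_of_antitone (p := (· < c)) (fun _ _ => lt_of_le_of_lt) hC
    have hlt_self := diagonal_ite_mul_self (R := R) (· < c)
    exact ⟨_, Subring.diagonal_ite_mem_upperTriangular _, _,
      Subring.diagonal_ite_mem_upperTriangular _, diagonal_ite_le_sub_diagonal_ite_lt c,
      mul_mul_eq_mul_of_corner hlt_self hlt_self hlt,
      mul_mul_eq_mul_of_corner hle_self hle_self hle⟩
  · refine ⟨_, Subring.diagonal_ite_mem_upperTriangular _, _,
      add_mem (Subring.diagonal_ite_mem_upperTriangular (· ≤ c))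
        (Subring.single_one_mem_upperTriangular hcd.le),
      add_sub_cancel_left _ _, mul_mul_eq_mul_of_corner hle_self hle_self hle,
      mul_mul_eq_mul_of_corner ?_ ?_ hle⟩
    · rw [add_mul, hle_self, single_mul_diagonal_ite (p := (· ≤ c)) c (not_le.mpr hcd),
        add_zero]
    · rw [mul_add, hle_self, diagonal_ite_mul_single (p := (· ≤ c)) le_rfl]

lemma leftEval_C_single_mul_mem {g : (Matrix ι ι R)[X]} (hC : C ∈ S.upperTriangular)
    (hg : ∀ M ∈ S.upperTriangular, leftEval M g ∈ S.upperTriangular) (hcd : c ≤ d) :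
    leftEval C (Polynomial.C (single c d 1) * g) ∈ S.upperTriangular := by
  obtain ⟨y₀, hy₀, y₁, hy₁, hy, h₀, h₁⟩ :=
    exists_sub_eq_single_of_blockTriangular (S := S) hC.1 hcd
  have key : leftEval C (Polynomial.C (single c d 1) * g) =
      leftEval (C * y₁) g - leftEval (C * y₀) g + single c d 1 * g.coeff 0 := by
    rw [leftEval_mul_eq_of_mul_mul_eq h₁, leftEval_mul_eq_of_mul_mul_eq h₀, ← hy, C_sub, sub_mul,
      map_sub]
    noncomm_ring
  rw [key, coeff_zero_eq_leftEval_zero]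
  exact add_mem (sub_mem (hg _ (mul_mem hC hy₁)) (hg _ (mul_mem hC hy₀)))
    (mul_mem (Subring.single_one_mem_upperTriangular hcd) (hg 0 (zero_mem _)))

end Ring

variable [CommRing R] {S : Subring R}

lemma leftEval_mul_mem {C : Matrix ι ι R} {f g : (Matrix ι ι R)[X]} (hC : C ∈ S.upperTriangular)
    (hf : leftEval C f ∈ S.upperTriangular)
    (hg : ∀ M ∈ S.upperTriangular, leftEval M g ∈ S.upperTriangular) :
    leftEval C (f * g) ∈ S.upperTriangular := by
  rw [leftEval_mul, matrix_eq_sum_single (leftEval C f)]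
  simp only [map_sum, Finset.sum_mul]
  refine sum_mem fun c _ => sum_mem fun d _ => ?_
  rw [← mul_one (leftEval C f c d), ← smul_eq_mul (leftEval C f c d) 1, ← smul_single, ← smul_C,
    smul_mul_assoc, leftEval_smul]
  rcases le_or_gt c d with hcd | hdc
  · exact Subring.smul_mem_upperTriangular (hf.2 c d) (leftEval_C_single_mul_mem hC hg hcd)
  · rw [hf.1 hdc, zero_smul]
    exact zero_mem _

variable (S) in
def leftIntValued : Subring (Matrix ι ι R)[X] where
  carrier := {f | (∀ k, (f.coeff k).BlockTriangular id) ∧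
    ∀ C ∈ S.upperTriangular, leftEval C f ∈ S.upperTriangular}
  zero_mem' := ⟨fun _ => blockTriangular_zero, fun _ _ => by rw [map_zero]; exact zero_mem _⟩
  one_mem' := ⟨fun k => by
      rw [coeff_one]; split_ifs; exacts [blockTriangular_one, blockTriangular_zero],
    fun _ _ => by rw [leftEval_one]; exact one_mem _⟩
  add_mem' hf hg := ⟨fun k => (hf.1 k).add (hg.1 k),
    fun C hC => by rw [map_add]; exact add_mem (hf.2 C hC) (hg.2 C hC)⟩
  neg_mem' hf := ⟨fun k => (hf.1 k).neg, fun C hC => by rw [map_neg]; exact neg_mem (hf.2 C hC)⟩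
  mul_mem' hf hg := ⟨fun k => by
      rw [coeff_mul]
      exact (blockTriangularSubsemiring R id).sum_mem fun x _ => (hf.1 x.1).mul (hg.1 x.2),
    fun C hC => leftEval_mul_mem hC (hf.2 C hC) hg.2⟩

end Matrix

end UpperTriangular

end

lemma isLeftIntValued_iff_mem_leftIntValued {n : ℕ} {D K : Type*} [CommRing D] [IsDomain D]
    [Field K] [Algebra D K] [IsFractionRing D K] (f : (Matrix (Fin n) (Fin n) K)[X]) :
    IsLeftIntValued n D K f ↔ f ∈ Matrix.leftIntValued (algebraMap D K).range :=
  and_congr_right' (forall_congr' fun _ => and_imp.symm)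

/-- The set of left integer-valued polynomials on `Tₙ(D)` with coefficients in
`Tₙ(K)` is a subring of `(Tₙ(K))[x]`. -/
theorem stmt18 (n : ℕ) (D K : Type*) [CommRing D] [IsDomain D] [Field K]
    [Algebra D K] [IsFractionRing D K] :
    IsLeftIntValued n D K 0 ∧ IsLeftIntValued n D K 1 ∧
    (∀ f g, IsLeftIntValued n D K f → IsLeftIntValued n D K g →
      IsLeftIntValued n D K (f + g) ∧ IsLeftIntValued n D K (f * g)) ∧
    (∀ f, IsLeftIntValued n D K f → IsLeftIntValued n D K (-f)) := by
  simp only [isLeftIntValued_iff_mem_leftIntValued]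
  set L := Matrix.leftIntValued (ι := Fin n) (algebraMap D K).range
  exact ⟨L.zero_mem, L.one_mem, fun f g hf hg => ⟨L.add_mem hf hg, L.mul_mem hf hg⟩,
    fun f hf => L.neg_mem hf⟩
end
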